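/- arXiv:2501.00322 — 6 statements merged into one kernel-verified Lean document; each statement's English description precedes it below -/
import Mathlib

section
/- The map ζ : ZZ → B defined piecewise by ζ(kN+1, kN) = 0; ζ(kN+i, kN+i) = ζ(kN+i+1, kN+i) = i for i ∈ {1,...,n−1}; ζ(kN+n, kN+n) = n; and ζ(kN−i+1, kN−i) = ζ(kN−i+1, kN−i+1) = n+m−i for i ∈ {1,...,m−1} (for all k ∈ ℤ, where N = n+m−1) is a well-defined order-preserving map of posets. -/
open CategoryTheory CategoryTheory.Limits

def ZZ : Type := {p : ℤᵒᵈ × ℤ // OrderDual.ofDual p.1 = p.2 ∨ OrderDual.ofDual p.1 = p.2 + 1}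

noncomputable instance : PartialOrder ZZ := Subtype.partialOrder _

def ZZ.a (p : ZZ) : ℤ := OrderDual.ofDual p.1.1
def ZZ.b (p : ZZ) : ℤ := p.1.2

def Bipath (n m : ℕ) : Type := {z : ℕ // z < n + m}

def bipathLE (n : ℕ) (x y : ℕ) : Prop :=
  x = y ∨ (0 < n ∧ ((x ≤ y ∧ y ≤ n) ∨ (n ≤ y ∧ y ≤ x) ∨ x = 0 ∨ y = n))

lemma bipathLE_refl (n x : ℕ) : bipathLE n x x := by unfold bipathLE; omega

lemma bipathLE_trans {n x y z : ℕ} (h1 : bipathLE n x y) (h2 : bipathLE n y z) :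
    bipathLE n x z := by unfold bipathLE at *; omega

lemma bipathLE_antisymm {n x y : ℕ} (h1 : bipathLE n x y) (h2 : bipathLE n y x) :
    x = y := by unfold bipathLE at *; omega

instance (n m : ℕ) : PartialOrder (Bipath n m) where
  le x y := bipathLE n x.1 y.1
  le_refl x := bipathLE_refl n x.1
  le_trans _ _ _ h1 h2 := bipathLE_trans h1 h2
  le_antisymm _ _ h1 h2 := Subtype.ext (bipathLE_antisymm h1 h2)

def zetaFun (n m : ℕ) (a b : ℤ) : ℕ :=
  if b % ((n : ℤ) + m - 1) = 0 then (if a = b then n + m - 1 else 0)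
  else if a = b then (b % ((n : ℤ) + m - 1)).toNat
  else if b % ((n : ℤ) + m - 1) ≤ (n : ℤ) - 1 then (b % ((n : ℤ) + m - 1)).toNat
  else (b % ((n : ℤ) + m - 1)).toNat + 1

lemma zetaFun_lt (n m : ℕ) (hn : 1 < n) (hm : 1 < m) (a b : ℤ) :
    zetaFun n m a b < n + m := by
  unfold zetaFun
  have hN : (0:ℤ) < (n : ℤ) + m - 1 := by omega
  have h1 := Int.emod_nonneg b (by omega : ((n:ℤ) + m - 1) ≠ 0)
  have h2 := Int.emod_lt_of_pos b hN
  split_ifs <;> omega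

def zeta (n m : ℕ) (hn : 1 < n) (hm : 1 < m) (p : ZZ) : Bipath n m :=
  ⟨zetaFun n m p.a p.b, zetaFun_lt n m hn hm _ _⟩
open CategoryTheory CategoryTheory.Limits
open scoped Classical

section IntervalModule
variable (k : Type) [Field k] {P : Type} [Preorder P]

/-- Convexity of a subset of a poset. -/
def IsConvexIn (I : Set P) : Prop :=
  ∀ ⦃p z q : P⦄, p ∈ I → q ∈ I → p ≤ z → z ≤ q → z ∈ I

/-- Connectedness of a subset of a poset: any two points are joined by a
zigzag of comparabilities inside the subset. -/
def IsConnectedIn (I : Set P) : Prop :=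
  ∀ x ∈ I, ∀ y ∈ I,
    Relation.ReflTransGen (fun a b => a ∈ I ∧ b ∈ I ∧ (a ≤ b ∨ b ≤ a)) x y

/-- An interval of a poset: a nonempty convex connected subset. -/
structure IsIntervalIn (I : Set P) : Prop where
  nonempty : I.Nonempty
  convex : IsConvexIn I
  connected : IsConnectedIn I

/-- The fiber of the interval module at a point: `k` if `p ∈ I`, `0` otherwise. -/
def intervalFiber (I : Set P) (p : P) : Submodule k k where
  carrier := {x : k | p ∉ I → x = 0}
  add_mem' := by intro a b ha hb h; rw [ha h, hb h, add_zero]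
  zero_mem' := fun _ => rfl
  smul_mem' := by intro c x hx h; rw [smul_eq_mul, hx h, mul_zero]

/-- Internal maps of the interval module. -/
noncomputable def intervalMap (I : Set P) (p q : P) :
    intervalFiber k I p →ₗ[k] intervalFiber k I q where
  toFun x := ⟨if q ∈ I then x.1 else 0, fun hq => if_neg hq⟩
  map_add' x y := by apply Subtype.ext; by_cases hq : q ∈ I <;> simp [hq]
  map_smul' c x := by apply Subtype.ext; by_cases hq : q ∈ I <;> simp [hq]

/-- The interval module `kI` supported on a convex subset `I`:
it is `k` on `I` with identity internal maps, and `0` elsewhere. -/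
noncomputable def intervalModule (I : Set P) (hI : IsConvexIn I) : P ⥤ ModuleCat k where
  obj p := ModuleCat.of k (intervalFiber k I p)
  map {p q} _ := ModuleCat.ofHom (intervalMap k I p q)
  map_id p := by
    ext x
    show (if p ∈ I then x.1 else 0) = x.1
    by_cases hp : p ∈ I
    · simp [hp]
    · simp [hp, x.2 hp]
  map_comp {p q r} f g := by
    ext x
    show (if r ∈ I then x.1 else 0) = (if r ∈ I then (if q ∈ I then x.1 else 0) else 0)
    by_cases hr : r ∈ I
    · by_cases hq : q ∈ I
      · simp [hr, hq]
      · have hp : p ∉ I := fun hp => hq (hI hp hr f.le g.le)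
        simp [hr, hq, x.2 hp]
    · simp [hr]

end IntervalModule

/-- The restriction functor along a monotone map, by precomposition. -/
noncomputable def restrictAlong (k : Type) [Field k] {P Q : Type} [Preorder P] [Preorder Q]
    {f : P → Q} (hf : Monotone f) : (Q ⥤ ModuleCat k) ⥤ (P ⥤ ModuleCat k) :=
  (Functor.whiskeringLeft _ _ _).obj hf.functor


lemma ZZ.le_iff {p q : ZZ} : p ≤ q ↔ q.a ≤ p.a ∧ p.b ≤ q.b := Iff.rfl

/-- Translation of a zigzag point by `z * N` in both coordinates. -/
def ZZ.translate (N z : ℤ) (p : ZZ) : ZZ :=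
  ⟨(OrderDual.toDual (p.a + z * N), p.b + z * N), by
    rcases p.2 with h | h
    · left; show p.a + z * N = p.b + z * N; unfold ZZ.a ZZ.b at *; omega
    · right; show p.a + z * N = p.b + z * N + 1; unfold ZZ.a ZZ.b at *; omega⟩

/-- The interval `[a,b]_ZZ = {(c,d) ∈ ZZ : c ≤ b, d ≥ a}`. -/
def zzIcc (a b : ℤ) : Set ZZ := {p | p.a ≤ b ∧ a ≤ p.b}
/-- The interval `[a,b)_ZZ = {(c,d) ∈ ZZ : a ≤ d < b}`. -/
def zzIco (a b : ℤ) : Set ZZ := {p | a ≤ p.b ∧ p.b < b}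
/-- The interval `(a,b]_ZZ = {(c,d) ∈ ZZ : a < c ≤ b}`. -/
def zzIoc (a b : ℤ) : Set ZZ := {p | a < p.a ∧ p.a ≤ b}
/-- The interval `(a,b)_ZZ = {(c,d) ∈ ZZ : c > a, d < b}`. -/
def zzIoo (a b : ℤ) : Set ZZ := {p | a < p.a ∧ p.b < b}

lemma zzIcc_convex (a b : ℤ) : IsConvexIn (zzIcc a b) := by
  intro p z q hp hq hpz hzq
  exact ⟨le_trans (ZZ.le_iff.1 hpz).1 hp.1, le_trans hp.2 (ZZ.le_iff.1 hpz).2⟩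

lemma zzIco_convex (a b : ℤ) : IsConvexIn (zzIco a b) := by
  intro p z q hp hq hpz hzq
  exact ⟨le_trans hp.1 (ZZ.le_iff.1 hpz).2, lt_of_le_of_lt (ZZ.le_iff.1 hzq).2 hq.2⟩

lemma zzIoc_convex (a b : ℤ) : IsConvexIn (zzIoc a b) := by
  intro p z q hp hq hpz hzq
  exact ⟨lt_of_lt_of_le hq.1 (ZZ.le_iff.1 hzq).1, le_trans (ZZ.le_iff.1 hpz).1 hp.2⟩

lemma zzIoo_convex (a b : ℤ) : IsConvexIn (zzIoo a b) := by
  intro p z q hp hq hpz hzq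
  exact ⟨lt_of_lt_of_le hq.1 (ZZ.le_iff.1 hzq).1, lt_of_le_of_lt (ZZ.le_iff.1 hzq).2 hq.2⟩

section ConvexLemmas
variable {P : Type} [Preorder P]

lemma isConvex_univ : IsConvexIn (Set.univ : Set P) := fun _ _ _ _ _ _ _ => trivial

lemma isConvex_lower2 (a b : P) : IsConvexIn {z : P | z ≤ a ∨ z ≤ b} := by
  intro p z q hp hq hpz hzq
  rcases hq with h | h
  · exact Or.inl (le_trans hzq h)
  · exact Or.inr (le_trans hzq h)

lemma isConvex_upper2 (a b : P) : IsConvexIn {z : P | a ≤ z ∨ b ≤ z} := by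
  intro p z q hp hq hpz hzq
  rcases hp with h | h
  · exact Or.inl (le_trans h hpz)
  · exact Or.inr (le_trans h hpz)

lemma isConvex_Icc (a b : P) : IsConvexIn {z : P | a ≤ z ∧ z ≤ b} :=
  fun _ _ _ hp hq hpz hzq => ⟨le_trans hp.1 hpz, le_trans hzq hq.2⟩

end ConvexLemmas


lemma my_mod_shift (n m : ℕ) (K i : ℤ) (h0 : 0 ≤ i) (h1 : i < (n:ℤ)+m-1) :
    (K * ((n:ℤ)+m-1) + i) % ((n:ℤ)+m-1) = i := by
  rw [add_comm, Int.add_mul_emod_self_right]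
  exact Int.emod_eq_of_lt h0 h1

lemma zeta_step1 (n m : ℕ) (hn : 1 < n) (hm : 1 < m) (b : ℤ) :
    bipathLE n (zetaFun n m (b+1) b) (zetaFun n m b b) := by
  have hne : b + 1 ≠ b := by omega
  have h0 : 0 ≤ b % ((n:ℤ)+m-1) := Int.emod_nonneg _ (by omega)
  have h1 : b % ((n:ℤ)+m-1) < (n:ℤ)+m-1 := Int.emod_lt_of_pos _ (by omega)
  unfold zetaFun bipathLE
  simp only [hne, if_false, if_pos rfl]
  generalize b % ((n:ℤ)+m-1) = r at *
  split_ifs <;> omega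

lemma zeta_step2 (n m : ℕ) (hn : 1 < n) (hm : 1 < m) (b : ℤ) :
    bipathLE n (zetaFun n m (b+1) b) (zetaFun n m (b+1) (b+1)) := by
  have hne : b + 1 ≠ b := by omega
  have h0 : 0 ≤ b % ((n:ℤ)+m-1) := Int.emod_nonneg _ (by omega)
  have h1 : b % ((n:ℤ)+m-1) < (n:ℤ)+m-1 := Int.emod_lt_of_pos _ (by omega)
  have key : (b+1) % ((n:ℤ)+m-1) =
      if b % ((n:ℤ)+m-1) = (n:ℤ)+m-2 then 0 else b % ((n:ℤ)+m-1) + 1 := by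
    rw [Int.add_emod]
    rw [Int.emod_eq_of_lt (by omega) (by omega : (1:ℤ) < (n:ℤ)+m-1)]
    split_ifs with h
    · rw [h]; rw [show ((n:ℤ)+m-2) + 1 = (n:ℤ)+m-1 by ring, Int.emod_self]
    · exact Int.emod_eq_of_lt (by omega) (by omega)
  unfold zetaFun bipathLE
  rw [key]
  simp only [hne, if_false, if_pos rfl]
  generalize b % ((n:ℤ)+m-1) = r at *
  split_ifs <;> omega

lemma zeta_monotone (n m : ℕ) (hn : 1 < n) (hm : 1 < m) :
    Monotone (zeta n m hn hm) := by
  intro p q h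
  obtain ⟨h1, h2⟩ := ZZ.le_iff.mp h
  have ha : p.a = p.b ∨ p.a = p.b + 1 := p.2
  have hb : q.a = q.b ∨ q.a = q.b + 1 := q.2
  show bipathLE n (zetaFun n m p.a p.b) (zetaFun n m q.a q.b)
  rcases show (p.a = q.a ∧ p.b = q.b) ∨
      (q.b = p.b + 1 ∧ p.a = p.b + 1 ∧ q.a = p.b + 1) ∨
      (q.b = p.b ∧ p.a = p.b + 1 ∧ q.a = p.b) from by omega with
    ⟨e1, e2⟩ | ⟨e1, e2, e3⟩ | ⟨e1, e2, e3⟩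
  · rw [e1, e2]; exact bipathLE_refl n _
  · rw [e1, e2, e3]; exact zeta_step2 n m hn hm p.b
  · rw [e1, e2, e3]; exact zeta_step1 n m hn hm p.b

/-- A point of the zigzag poset from coordinates. -/
def ZZ.mk (a b : ℤ) (h : a = b ∨ a = b + 1) : ZZ := ⟨(OrderDual.toDual a, b), h⟩

/-- The covering map `ζ : ZZ → B` (Definition of Alonso–Liu) is a well-defined
order-preserving map satisfying the defining piecewise equations. -/
theorem zeta_well_defined_and_monotone (n m : ℕ) (hn : 1 < n) (hm : 1 < m) :
    Monotone (zeta n m hn hm) ∧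
    ∀ K : ℤ,
      (zeta n m hn hm (ZZ.mk (K * ((n:ℤ)+m-1) + 1) (K * ((n:ℤ)+m-1)) (Or.inr rfl))).1 = 0 ∧
      (∀ i : ℤ, 1 ≤ i → i ≤ (n:ℤ) - 1 →
        ((zeta n m hn hm (ZZ.mk (K * ((n:ℤ)+m-1) + i) (K * ((n:ℤ)+m-1) + i) (Or.inl rfl))).1 : ℤ) = i ∧
        ((zeta n m hn hm (ZZ.mk (K * ((n:ℤ)+m-1) + i + 1) (K * ((n:ℤ)+m-1) + i) (Or.inr rfl))).1 : ℤ) = i) ∧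
      (zeta n m hn hm (ZZ.mk (K * ((n:ℤ)+m-1) + n) (K * ((n:ℤ)+m-1) + n) (Or.inl rfl))).1 = n ∧
      (∀ i : ℤ, 1 ≤ i → i ≤ (m:ℤ) - 1 →
        ((zeta n m hn hm (ZZ.mk (K * ((n:ℤ)+m-1) - i + 1) (K * ((n:ℤ)+m-1) - i) (Or.inr rfl))).1 : ℤ) = (n:ℤ) + m - i ∧
        ((zeta n m hn hm (ZZ.mk (K * ((n:ℤ)+m-1) - i + 1) (K * ((n:ℤ)+m-1) - i + 1) (Or.inl rfl))).1 : ℤ) = (n:ℤ) + m - i) := by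
  refine ⟨zeta_monotone n m hn hm, fun K => ?_⟩
  have hmod0 : (K * ((n:ℤ)+m-1)) % ((n:ℤ)+m-1) = 0 := by
    have := my_mod_shift n m K 0 le_rfl (by omega)
    simpa using this
  refine ⟨?_, ?_, ?_, ?_⟩
  · show zetaFun n m (K * ((n:ℤ)+m-1) + 1) (K * ((n:ℤ)+m-1)) = 0
    unfold zetaFun
    rw [hmod0, if_pos rfl, if_neg (by omega)]
  · intro i hi1 hi2
    have hmi : (K * ((n:ℤ)+m-1) + i) % ((n:ℤ)+m-1) = i :=
      my_mod_shift n m K i (by omega) (by omega)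
    constructor
    · show ((zetaFun n m (K * ((n:ℤ)+m-1) + i) (K * ((n:ℤ)+m-1) + i) : ℕ) : ℤ) = i
      unfold zetaFun
      rw [hmi, if_neg (by omega), if_pos rfl]
      omega
    · show ((zetaFun n m (K * ((n:ℤ)+m-1) + i + 1) (K * ((n:ℤ)+m-1) + i) : ℕ) : ℤ) = i
      unfold zetaFun
      rw [hmi, if_neg (by omega), if_neg (by omega), if_pos (by omega)]
      omega
  · show zetaFun n m (K * ((n:ℤ)+m-1) + n) (K * ((n:ℤ)+m-1) + n) = n
    have hmn : (K * ((n:ℤ)+m-1) + n) % ((n:ℤ)+m-1) = n :=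
      my_mod_shift n m K n (by omega) (by omega)
    unfold zetaFun
    rw [hmn, if_neg (by omega), if_pos rfl]
    omega
  · intro i hi1 hi2
    have hmi : (K * ((n:ℤ)+m-1) - i) % ((n:ℤ)+m-1) = (n:ℤ)+m-1-i := by
      rw [show K * ((n:ℤ)+m-1) - i = (K-1) * ((n:ℤ)+m-1) + ((n:ℤ)+m-1-i) by ring]
      exact my_mod_shift n m (K-1) _ (by omega) (by omega)
    constructor
    · show ((zetaFun n m (K * ((n:ℤ)+m-1) - i + 1) (K * ((n:ℤ)+m-1) - i) : ℕ) : ℤ)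
        = (n:ℤ) + m - i
      unfold zetaFun
      rw [hmi, if_neg (by omega), if_neg (by omega), if_neg (by omega)]
      omega
    · show ((zetaFun n m (K * ((n:ℤ)+m-1) - i + 1) (K * ((n:ℤ)+m-1) - i + 1) : ℕ) : ℤ)
        = (n:ℤ) + m - i
      by_cases hi : i = 1
      · subst hi
        have hb' : K * ((n:ℤ)+m-1) - 1 + 1 = K * ((n:ℤ)+m-1) := by ring
        unfold zetaFun
        rw [hb', hmod0, if_pos rfl, if_pos rfl]
        push_cast
        omega
      · have hmi' : (K * ((n:ℤ)+m-1) - i + 1) % ((n:ℤ)+m-1) = (n:ℤ)+m-i := by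
          rw [show K * ((n:ℤ)+m-1) - i + 1 = (K-1) * ((n:ℤ)+m-1) + ((n:ℤ)+m-i) by ring]
          exact my_mod_shift n m (K-1) _ (by omega) (by omega)
        unfold zetaFun
        rw [hmi', if_neg (by omega), if_pos rfl]
        omega
end

section
/- Every interval (i.e., connected convex nonempty subposet) of the bipath poset B is exactly one of the following: (1) the full poset B; (2) a left interval [i,j]◁ = {z : 0 ≤ z ≤ i} ∪ {z : 0 ≤ z ≤ j} for some i ∈ {0,...,n−1} and j ∈ {0, n+m−1,...,n+1}; (3) a right interval [i,j]▷ = {z : i ≤ z ≤ n} ∪ {z : j ≤ z ≤ n} for some i ∈ {1,...,n} and j ∈ {n+m−1,...,n+1,n}; (4) a top interval [i,j]⊤ = {z : i ≤ z ≤ j} for some i, j ∈ {1,...,n−1} with i ≤ j; (5) a bottom interval [i,j]⊥ = {z : j ≤ z ≤ i} for some i, j ∈ {n+m−1,...,n+1} with j ≤ i (in the bipath order). -/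
open CategoryTheory CategoryTheory.Limits

open CategoryTheory CategoryTheory.Limits
open scoped Classical

/-!
The bipath poset is the union of two chains, the upper arm `0 < 1 < ⋯ < n` and the lower arm
`0 < n+m-1 < ⋯ < n+1 < n`, which meet only in the bottom `0` and the top `n`. A convex set
containing both ends is everything. If it contains the bottom but not the top it is a lower
set, hence generated by its greatest element on each arm; dually if it contains only the top.
If it contains neither, its points on different arms are incomparable, so connectedness confines
it to one arm, where a convex set is a segment between its least and greatest elements.
-/

section Order
variable {P : Type} [Preorder P]

lemma IsChain.exists_isGreatest {s : Set P} (hc : IsChain (· ≤ ·) s) (hfin : s.Finite)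
    (hne : s.Nonempty) : ∃ a, IsGreatest s a := by
  obtain ⟨a, ha⟩ := hfin.exists_maximal hne
  refine ⟨a, ha.prop, fun x hx => ?_⟩
  rcases hc.total hx ha.prop with h | h
  exacts [h, ha.le_of_ge hx h]

lemma IsChain.exists_isLeast {s : Set P} (hc : IsChain (· ≤ ·) s) (hfin : s.Finite)
    (hne : s.Nonempty) : ∃ a, IsLeast s a := by
  obtain ⟨a, ha⟩ := hfin.exists_minimal hne
  refine ⟨a, ha.prop, fun x hx => ?_⟩
  rcases hc.total hx ha.prop with h | h
  exacts [ha.le_of_le hx h, h]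

lemma IsConvexIn.isLowerSet {I : Set P} (hI : IsConvexIn I) {a : P} (ha : a ∈ I)
    (hbot : ∀ z, a ≤ z) : IsLowerSet I :=
  fun _ z hzq hq => hI ha hq (hbot z) hzq

lemma IsConvexIn.isUpperSet {I : Set P} (hI : IsConvexIn I) {b : P} (hb : b ∈ I)
    (htop : ∀ z, z ≤ b) : IsUpperSet I :=
  fun _ z hpz hp => hI hp hb hpz (htop z)

lemma IsConvexIn.exists_eq_Icc_of_isChain {I : Set P} (hI : IsConvexIn I)
    (hc : IsChain (· ≤ ·) I) (hfin : I.Finite) (hne : I.Nonempty) :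
    ∃ a ∈ I, ∃ b ∈ I, a ≤ b ∧ I = {z | a ≤ z ∧ z ≤ b} := by
  obtain ⟨a, ha⟩ := hc.exists_isLeast hfin hne
  obtain ⟨b, hb⟩ := hc.exists_isGreatest hfin hne
  exact ⟨a, ha.1, b, hb.1, ha.2 hb.1,
    Set.ext fun _ => ⟨fun hz => ⟨ha.2 hz, hb.2 hz⟩, fun hz => hI ha.1 hb.1 hz.1 hz.2⟩⟩

lemma IsLowerSet.eq_of_isGreatest_inter {I A B : Set P} (hI : IsLowerSet I)
    (hAB : I ⊆ A ∪ B) {i j : P} (hi : IsGreatest (I ∩ A) i) (hj : IsGreatest (I ∩ B) j) :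
    I = {z | z ≤ i ∨ z ≤ j} := by
  ext z
  refine ⟨fun hz => (hAB hz).imp (fun hA => hi.2 ⟨hz, hA⟩) (fun hB => hj.2 ⟨hz, hB⟩), ?_⟩
  rintro (h | h)
  exacts [hI h hi.1.1, hI h hj.1.1]

lemma IsUpperSet.eq_of_isLeast_inter {I A B : Set P} (hI : IsUpperSet I)
    (hAB : I ⊆ A ∪ B) {i j : P} (hi : IsLeast (I ∩ A) i) (hj : IsLeast (I ∩ B) j) :
    I = {z | i ≤ z ∨ j ≤ z} := by
  ext z
  refine ⟨fun hz => (hAB hz).imp (fun hA => hi.2 ⟨hz, hA⟩) (fun hB => hj.2 ⟨hz, hB⟩), ?_⟩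
  rintro (h | h)
  exacts [hI h hi.1.1, hI h hj.1.1]

lemma IsConnectedIn.iff_of_forall_le_iff {I : Set P} (hI : IsConnectedIn I) {p : P → Prop}
    (hp : ∀ x ∈ I, ∀ y ∈ I, x ≤ y → (p x ↔ p y)) {x y : P} (hx : x ∈ I) (hy : y ∈ I) :
    p x ↔ p y := by
  induction hI x hx y hy with
  | refl => rfl
  | tail _ step ih =>
    obtain ⟨hb, hc, hbc | hcb⟩ := step
    exacts [(ih hb).trans (hp _ hb _ hc hbc), (ih hb).trans (hp _ hc _ hb hcb).symm]

lemma isIntervalIn_of_comparable {I : Set P} (hI : IsConvexIn I) {h : P} (hh : h ∈ I)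
    (hcomp : ∀ x ∈ I, x ≤ h ∨ h ≤ x) : IsIntervalIn I :=
  ⟨⟨h, hh⟩, hI, fun x hx y hy =>
    .tail (.single ⟨hx, hh, hcomp x hx⟩) ⟨hh, hy, (hcomp y hy).symm⟩⟩

end Order

namespace Bipath
variable {n m : ℕ}

instance : Finite (Bipath n m) := inferInstanceAs (Finite {z : ℕ // z < n + m})

lemma le_def {x y : Bipath n m} : x ≤ y ↔ bipathLE n x.1 y.1 := Iff.rfl

def upperArm (n m : ℕ) : Set (Bipath n m) := {z | z.1 ≤ n}

-- The order on this arm reverses the labels: `0 < n+m-1 < ⋯ < n+1 < n`.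
def lowerArm (n m : ℕ) : Set (Bipath n m) := {z | z.1 = 0 ∨ n ≤ z.1}

lemma mem_upperArm {z : Bipath n m} : z ∈ upperArm n m ↔ z.1 ≤ n := Iff.rfl

lemma mem_lowerArm {z : Bipath n m} : z ∈ lowerArm n m ↔ z.1 = 0 ∨ n ≤ z.1 := Iff.rfl

lemma isChain_upperArm : IsChain (· ≤ ·) (upperArm n m) := by
  intro x hx y hy _
  rw [mem_upperArm] at hx hy
  simp only [le_def, bipathLE]
  omega

lemma isChain_lowerArm (hn : 0 < n) : IsChain (· ≤ ·) (lowerArm n m) := by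
  intro x hx y hy _
  rw [mem_lowerArm] at hx hy
  simp only [le_def, bipathLE]
  omega

lemma subset_upperArm_union_lowerArm (s : Set (Bipath n m)) :
    s ⊆ upperArm n m ∪ lowerArm n m := fun z _ => by
  rw [Set.mem_union, mem_upperArm, mem_lowerArm]
  omega

lemma val_lt_iff_of_le {x y : Bipath n m} (hxy : x ≤ y) (hx : x.1 ≠ 0) (hy : y.1 ≠ n) :
    x.1 < n ↔ y.1 < n := by
  rw [le_def, bipathLE] at hxy
  omega

def bot (hn : 0 < n) : Bipath n m := ⟨0, by omega⟩

def top (hm : 0 < m) : Bipath n m := ⟨n, by omega⟩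

lemma bot_le (hn : 0 < n) (z : Bipath n m) : bot hn ≤ z := by
  rw [le_def, bipathLE]
  exact Or.inr ⟨hn, Or.inr (Or.inr (Or.inl rfl))⟩

lemma le_top (hn : 0 < n) (hm : 0 < m) (z : Bipath n m) : z ≤ top hm := by
  rw [le_def, bipathLE]
  exact Or.inr ⟨hn, Or.inr (Or.inr (Or.inr rfl))⟩

lemma eq_bot_of_val_eq (hn : 0 < n) {z : Bipath n m} (hz : z.1 = 0) : z = bot hn :=
  Subtype.ext hz

lemma eq_top_of_val_eq (hm : 0 < m) {z : Bipath n m} (hz : z.1 = n) : z = top hm :=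
  Subtype.ext hz

def IsLeftInterval (I : Set (Bipath n m)) : Prop :=
  ∃ i j : Bipath n m, i.1 ≤ n - 1 ∧ (j.1 = 0 ∨ n + 1 ≤ j.1) ∧ I = {z | z ≤ i ∨ z ≤ j}

def IsRightInterval (I : Set (Bipath n m)) : Prop :=
  ∃ i j : Bipath n m, 1 ≤ i.1 ∧ i.1 ≤ n ∧ (j.1 = n ∨ n + 1 ≤ j.1) ∧ I = {z | i ≤ z ∨ j ≤ z}

def IsTopInterval (I : Set (Bipath n m)) : Prop :=
  ∃ i j : Bipath n m, 1 ≤ i.1 ∧ i.1 ≤ n - 1 ∧ 1 ≤ j.1 ∧ j.1 ≤ n - 1 ∧ i ≤ j ∧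
    I = {z | i ≤ z ∧ z ≤ j}

def IsBottomInterval (I : Set (Bipath n m)) : Prop :=
  ∃ i j : Bipath n m, n + 1 ≤ i.1 ∧ n + 1 ≤ j.1 ∧ j ≤ i ∧ I = {z | j ≤ z ∧ z ≤ i}

section Classification
variable (hn : 0 < n) (hm : 0 < m) {I : Set (Bipath n m)}

lemma eq_univ_of_bot_mem_of_top_mem (hI : IsConvexIn I) (hbot : bot hn ∈ I)
    (htop : top hm ∈ I) : I = Set.univ :=
  Set.eq_univ_of_forall fun z => hI hbot htop (bot_le hn z) (le_top hn hm z)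

lemma isLeftInterval_of_bot_mem (hI : IsConvexIn I) (hbot : bot hn ∈ I) (htop : top hm ∉ I) :
    IsLeftInterval I := by
  obtain ⟨i, hi⟩ := (isChain_upperArm.mono Set.inter_subset_right).exists_isGreatest
    (Set.toFinite _) ⟨bot hn, hbot, Nat.zero_le n⟩
  obtain ⟨j, hj⟩ := ((isChain_lowerArm hn).mono Set.inter_subset_right).exists_isGreatest
    (Set.toFinite _) ⟨bot hn, hbot, Or.inl rfl⟩
  have hi_ne : i.1 ≠ n := fun h => htop (eq_top_of_val_eq hm h ▸ hi.1.1)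
  have hj_ne : j.1 ≠ n := fun h => htop (eq_top_of_val_eq hm h ▸ hj.1.1)
  have hi_arm := mem_upperArm.1 hi.1.2
  have hj_arm := mem_lowerArm.1 hj.1.2
  refine ⟨i, j, by omega, by omega, ?_⟩
  exact (hI.isLowerSet hbot (bot_le hn)).eq_of_isGreatest_inter
    (subset_upperArm_union_lowerArm I) hi hj

lemma isRightInterval_of_top_mem (hI : IsConvexIn I) (hbot : bot hn ∉ I) (htop : top hm ∈ I) :
    IsRightInterval I := by
  obtain ⟨i, hi⟩ := (isChain_upperArm.mono Set.inter_subset_right).exists_isLeast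
    (Set.toFinite _) ⟨top hm, htop, le_refl n⟩
  obtain ⟨j, hj⟩ := ((isChain_lowerArm hn).mono Set.inter_subset_right).exists_isLeast
    (Set.toFinite _) ⟨top hm, htop, Or.inr (le_refl n)⟩
  have hi_ne : i.1 ≠ 0 := fun h => hbot (eq_bot_of_val_eq hn h ▸ hi.1.1)
  have hj_ne : j.1 ≠ 0 := fun h => hbot (eq_bot_of_val_eq hn h ▸ hj.1.1)
  have hi_arm := mem_upperArm.1 hi.1.2
  have hj_arm := mem_lowerArm.1 hj.1.2
  refine ⟨i, j, by omega, hi_arm, by omega, ?_⟩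
  exact (hI.isUpperSet htop (le_top hn hm)).eq_of_isLeast_inter
    (subset_upperArm_union_lowerArm I) hi hj

lemma isTopInterval_or_isBottomInterval (hI : IsIntervalIn I) (hbot : bot hn ∉ I)
    (htop : top hm ∉ I) : IsTopInterval I ∨ IsBottomInterval I := by
  have hne0 : ∀ z ∈ I, z.1 ≠ 0 := fun z hz h => hbot (eq_bot_of_val_eq hn h ▸ hz)
  have hnen : ∀ z ∈ I, z.1 ≠ n := fun z hz h => htop (eq_top_of_val_eq hm h ▸ hz)
  obtain ⟨x, hx⟩ := hI.nonempty
  have hside : ∀ z ∈ I, (x.1 < n ↔ z.1 < n) := fun z hz =>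
    hI.connected.iff_of_forall_le_iff (p := fun z : Bipath n m => z.1 < n)
      (fun u hu v hv huv => val_lt_iff_of_le huv (hne0 u hu) (hnen v hv)) hx hz
  by_cases hxn : x.1 < n
  · have hsub : I ⊆ upperArm n m := fun z hz => by
      have := hside z hz
      rw [mem_upperArm]
      omega
    obtain ⟨i, hi, j, hj, hij, hI_eq⟩ := hI.convex.exists_eq_Icc_of_isChain
      (isChain_upperArm.mono hsub) (Set.toFinite _) ⟨x, hx⟩
    have := hside i hi; have := hne0 i hi; have := hside j hj; have := hne0 j hj
    exact Or.inl ⟨i, j, by omega, by omega, by omega, by omega, hij, hI_eq⟩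
  · have hsub : I ⊆ lowerArm n m := fun z hz => by
      have := hside z hz
      rw [mem_lowerArm]
      omega
    obtain ⟨i, hi, j, hj, hij, hI_eq⟩ := hI.convex.exists_eq_Icc_of_isChain
      ((isChain_lowerArm hn).mono hsub) (Set.toFinite _) ⟨x, hx⟩
    have := hside i hi; have := hnen i hi; have := hside j hj; have := hnen j hj
    exact Or.inr ⟨j, i, by omega, by omega, hij, hI_eq⟩

end Classification

lemma isIntervalIn_univ (hn : 0 < n) : IsIntervalIn (Set.univ : Set (Bipath n m)) :=
  isIntervalIn_of_comparable isConvex_univ (Set.mem_univ (bot hn)) fun x _ => Or.inr (bot_le hn x)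

lemma IsLeftInterval.isIntervalIn (hn : 0 < n) {I : Set (Bipath n m)} (h : IsLeftInterval I) :
    IsIntervalIn I := by
  obtain ⟨i, j, -, -, rfl⟩ := h
  exact isIntervalIn_of_comparable (isConvex_lower2 i j) (Or.inl (bot_le hn i))
    fun x _ => Or.inr (bot_le hn x)

lemma IsRightInterval.isIntervalIn (hn : 0 < n) (hm : 0 < m) {I : Set (Bipath n m)}
    (h : IsRightInterval I) : IsIntervalIn I := by
  obtain ⟨i, j, -, -, -, rfl⟩ := h
  exact isIntervalIn_of_comparable (isConvex_upper2 i j) (Or.inl (le_top hn hm i))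
    fun x _ => Or.inl (le_top hn hm x)

lemma IsTopInterval.isIntervalIn {I : Set (Bipath n m)} (h : IsTopInterval I) :
    IsIntervalIn I := by
  obtain ⟨i, j, -, -, -, -, hij, rfl⟩ := h
  exact isIntervalIn_of_comparable (isConvex_Icc i j) ⟨le_rfl, hij⟩ fun _ hx => Or.inr hx.1

lemma IsBottomInterval.isIntervalIn {I : Set (Bipath n m)} (h : IsBottomInterval I) :
    IsIntervalIn I := by
  obtain ⟨i, j, -, -, hji, rfl⟩ := h
  exact isIntervalIn_of_comparable (isConvex_Icc j i) ⟨hji, le_rfl⟩ fun _ hx => Or.inl hx.2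

end Bipath

/-- Classification of the intervals of the bipath poset: every interval is
the full poset, a left interval, a right interval, a top interval or a
bottom interval. -/
theorem bipath_interval_classification (n m : ℕ) (hn : 1 < n) (hm : 1 < m)
    (I : Set (Bipath n m)) :
    IsIntervalIn I ↔
      (I = Set.univ ∨
       (∃ i j : Bipath n m, i.1 ≤ n - 1 ∧ (j.1 = 0 ∨ n + 1 ≤ j.1) ∧
          I = {z | z ≤ i ∨ z ≤ j}) ∨
       (∃ i j : Bipath n m, 1 ≤ i.1 ∧ i.1 ≤ n ∧ (j.1 = n ∨ n + 1 ≤ j.1) ∧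
          I = {z | i ≤ z ∨ j ≤ z}) ∨
       (∃ i j : Bipath n m, 1 ≤ i.1 ∧ i.1 ≤ n - 1 ∧ 1 ≤ j.1 ∧ j.1 ≤ n - 1 ∧ i ≤ j ∧
          I = {z | i ≤ z ∧ z ≤ j}) ∨
       (∃ i j : Bipath n m, n + 1 ≤ i.1 ∧ n + 1 ≤ j.1 ∧ j ≤ i ∧
          I = {z | j ≤ z ∧ z ≤ i})) := by
  have hn₀ : 0 < n := by omega
  have hm₀ : 0 < m := by omega
  constructor
  · intro hI
    by_cases hbot : Bipath.bot hn₀ ∈ I <;> by_cases htop : Bipath.top hm₀ ∈ I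
    · exact Or.inl (Bipath.eq_univ_of_bot_mem_of_top_mem hn₀ hm₀ hI.convex hbot htop)
    · exact Or.inr <| Or.inl <| Bipath.isLeftInterval_of_bot_mem hn₀ hm₀ hI.convex hbot htop
    · exact Or.inr <| Or.inr <| Or.inl <|
        Bipath.isRightInterval_of_top_mem hn₀ hm₀ hI.convex hbot htop
    · exact Or.inr <| Or.inr <| Or.inr <|
        Bipath.isTopInterval_or_isBottomInterval hn₀ hm₀ hI hbot htop
  · rintro (rfl | h | h | h | h)
    exacts [Bipath.isIntervalIn_univ hn₀, Bipath.IsLeftInterval.isIntervalIn hn₀ h,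
      Bipath.IsRightInterval.isIntervalIn hn₀ hm₀ h, Bipath.IsTopInterval.isIntervalIn h,
      Bipath.IsBottomInterval.isIntervalIn h]
end

section
/- For any poset P and any interval I ⊆ P, the interval module kI (which assigns the field k at points of I, zero elsewhere, with identity internal maps between points of I and zero maps otherwise) is an indecomposable persistence module: if kI ≅ A ⊕ B then A = 0 or B = 0. -/
open CategoryTheory CategoryTheory.Limits

open CategoryTheory CategoryTheory.Limits
open scoped Classical

/-!
Every endomorphism of `kI` acts on each fibre `k` over `I` by a scalar, and naturality along a
comparability `p ≤ q` inside `I` forces the scalars at `p` and `q` to agree; since `I` is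
connected, the endomorphism is multiplication by one scalar `c`. For an idempotent, `c² = c`, so it
is `0` or the identity. A decomposition `kI ≅ A ⊞ B` produces the idempotent projecting onto `A`:
if it is `0` then `A = 0`, if it is the identity then `B = 0`.
-/

lemma isZero_or_isZero_of_iso_biprod {C : Type*} [Category C] [Preadditive C]
    [HasBinaryBiproducts C] {X A B : C}
    (hX : ∀ e : X ⟶ X, e ≫ e = e → e = 0 ∨ e = 𝟙 X) (φ : X ≅ A ⊞ B) :
    IsZero A ∨ IsZero B := by
  set e := φ.hom ≫ biprod.fst ≫ biprod.inl ≫ φ.inv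
  have he : biprod.fst ≫ biprod.inl = φ.inv ≫ e ≫ φ.hom := by simp [e]
  rcases hX e (by simp [e]) with he₀ | he₁
  · left
    rw [IsZero.iff_id_eq_zero]
    calc 𝟙 A = biprod.inl ≫ (biprod.fst ≫ biprod.inl) ≫ biprod.fst := by simp
      _ = 0 := by rw [he, he₀]; simp
  · right
    rw [IsZero.iff_id_eq_zero]
    calc 𝟙 B = biprod.inr ≫ (𝟙 _ - biprod.fst ≫ biprod.inl) ≫ biprod.snd := by simp
      _ = 0 := by rw [he, he₁]; simp

section IntervalFiber
variable {k : Type} [Field k] {P : Type} {I : Set P}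

def intervalFiberOne {p : P} (hp : p ∈ I) : intervalFiber k I p :=
  ⟨1, fun h => absurd hp h⟩

lemma LinearMap.intervalFiber_apply_eq_mul {p : P} (hp : p ∈ I)
    (f : intervalFiber k I p →ₗ[k] intervalFiber k I p) (x : intervalFiber k I p) :
    (f x).1 = (f (intervalFiberOne hp)).1 * x.1 := by
  have hx : x = x.1 • intervalFiberOne hp := Subtype.ext (mul_one x.1).symm
  conv_lhs => rw [hx, f.map_smul]
  exact mul_comm x.1 _

end IntervalFiber

namespace intervalModule
variable {k : Type} [Field k] {P : Type} [Preorder P] {I : Set P} {hI : IsConvexIn I}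
variable (φ : intervalModule k I hI ⟶ intervalModule k I hI)

noncomputable def endCoeff {p : P} (hp : p ∈ I) : k :=
  ((φ.app p).hom (intervalFiberOne hp)).1

lemma endCoeff_eq_of_le {p q : P} (hp : p ∈ I) (hq : q ∈ I) (hpq : p ≤ q) :
    endCoeff φ hp = endCoeff φ hq := by
  have hnat := congrArg (fun g => (g.hom (intervalFiberOne hp)).1) (φ.naturality (homOfLE hpq))
  have hone : intervalMap k I p q (intervalFiberOne hp) = intervalFiberOne hq :=
    Subtype.ext (if_pos hq)
  calc endCoeff φ hp = (intervalMap k I p q ((φ.app p).hom (intervalFiberOne hp))).1 :=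
        (if_pos hq).symm
    _ = ((φ.app q).hom (intervalMap k I p q (intervalFiberOne hp))).1 := hnat.symm
    _ = endCoeff φ hq := congrArg (fun y : intervalFiber k I q => ((φ.app q).hom y).1) hone

lemma endCoeff_eq_of_reflTransGen {p q : P} (hp : p ∈ I) (hq : q ∈ I)
    (hpq : Relation.ReflTransGen (fun a b => a ∈ I ∧ b ∈ I ∧ (a ≤ b ∨ b ≤ a)) p q) :
    endCoeff φ hp = endCoeff φ hq := by
  induction hpq with
  | refl => rfl
  | tail _ hstep ih =>
    obtain ⟨ha, hb, hab | hba⟩ := hstep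
    · exact (ih ha).trans (endCoeff_eq_of_le φ ha hb hab)
    · exact (ih ha).trans (endCoeff_eq_of_le φ hb ha hba).symm

lemma exists_app_val_eq_mul (hcon : IsConnectedIn I) :
    ∃ c : k, ∀ p (x : intervalFiber k I p), ((φ.app p).hom x).1 = c * x.1 := by
  rcases I.eq_empty_or_nonempty with hempty | ⟨p₀, hp₀⟩
  · refine ⟨0, fun p x => ?_⟩
    rw [((φ.app p).hom x).2 (hempty ▸ Set.notMem_empty p), zero_mul]
  refine ⟨endCoeff φ hp₀, fun p x => ?_⟩
  by_cases hp : p ∈ I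
  · rw [endCoeff_eq_of_reflTransGen φ hp₀ hp (hcon p₀ hp₀ p hp)]
    exact LinearMap.intervalFiber_apply_eq_mul hp _ x
  · rw [((φ.app p).hom x).2 hp, x.2 hp, mul_zero]

lemma idempotent_eq_zero_or_id (hne : I.Nonempty) (hcon : IsConnectedIn I)
    (he : φ ≫ φ = φ) : φ = 0 ∨ φ = 𝟙 _ := by
  obtain ⟨c, hc⟩ := exists_app_val_eq_mul φ hcon
  obtain ⟨p₀, hp₀⟩ := hne
  have hcc : c * c = c := by
    have h := congrArg (fun g => ((g.app p₀).hom (intervalFiberOne hp₀)).1) he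
    have h₁ : ((φ.app p₀).hom (intervalFiberOne hp₀)).1 = c := (hc p₀ _).trans (mul_one c)
    have h₂ : ((φ.app p₀).hom ((φ.app p₀).hom (intervalFiberOne hp₀))).1 = c * c :=
      (hc p₀ _).trans (congrArg (c * ·) h₁)
    exact h₂.symm.trans (h.trans h₁)
  rcases IsIdempotentElem.iff_eq_zero_or_one.1 hcc with rfl | rfl
  · left
    ext p x
    exact Subtype.ext ((hc p x).trans (zero_mul _))
  · right
    ext p x
    exact Subtype.ext ((hc p x).trans (one_mul _))

end intervalModule

theorem intervalModule_indecomposable_general (k : Type) [Field k] (P : Type) [PartialOrder P]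
    (I : Set P) (hI : IsIntervalIn I)
    (A B : P ⥤ ModuleCat k)
    (h : Nonempty (intervalModule k I hI.convex ≅ A ⊞ B)) :
    Limits.IsZero A ∨ Limits.IsZero B := by
  obtain ⟨φ⟩ := h
  exact isZero_or_isZero_of_iso_biprod
    (fun e he => intervalModule.idempotent_eq_zero_or_id e hI.nonempty hI.connected he) φ

/-- Interval modules are indecomposable: if `kI ≅ A ⊕ B` then `A = 0` or `B = 0`. -/
theorem intervalModule_indecomposable (k : Type) [Field k] (P : Type) [PartialOrder P]
    (I : Set P) (hI : IsIntervalIn I)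
    (A B : P ⥤ ModuleCat k)
    (hA : ∀ p : P, FiniteDimensional k (A.obj p))
    (hB : ∀ p : P, FiniteDimensional k (B.obj p))
    (h : Nonempty (intervalModule k I hI.convex ≅ A ⊞ B)) :
    Limits.IsZero A ∨ Limits.IsZero B :=
  intervalModule_indecomposable_general k P I hI A B h
end

section
/- Let [i,j]⊤ = {z ∈ B : i ≤ z ≤ j} be a top interval of the bipath poset (i, j ∈ {1,...,n−1}, i ≤ j). Then the restriction of the interval module k[i,j]⊤ along the covering map decomposes as the direct sum over k ∈ ℤ of interval modules k[kN+i, kN+j+1)_ZZ, where [a,b)_ZZ = {(c,d) ∈ ZZ : a ≤ d < b} and N = n+m−1. -/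
/-! The preimage of `[i,j]⊤` under `ζ` consists of the points `(a,b)` of `ZZ` with
`b mod N ∈ [i,j]`, so it is the disjoint union over `z` of the sets `[zN+i, zN+j+1)_ZZ`.
Along a comparability of `ZZ` the coordinate `b` grows by at most one, and since
`[i,j] ⊆ [1, N-2]` it cannot pass from one of these pieces to the next without leaving the
preimage. An interval module whose support splits in this way is the coproduct of the interval
modules of the pieces: this holds pointwise, and colimits of functors are computed pointwise. -/

open CategoryTheory CategoryTheory.Limits

open CategoryTheory CategoryTheory.Limits
open scoped Classical

lemma IsConvexIn.preimage {P Q : Type} [Preorder P] [Preorder Q] {f : P → Q} (hf : Monotone f)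
    {I : Set Q} (hI : IsConvexIn I) : IsConvexIn (f ⁻¹' I) :=
  fun _ _ _ hp hq hpz hzq => hI hp hq (hf hpz) (hf hzq)

section IntervalModuleDecomposition
variable (k : Type) [Field k] {P : Type} [Preorder P]

noncomputable def restrictAlongIntervalModuleIso {Q : Type} [Preorder Q] {f : P → Q}
    (hf : Monotone f) (I : Set Q) (hI : IsConvexIn I) :
    (restrictAlong k hf).obj (intervalModule k I hI) ≅
      intervalModule k (f ⁻¹' I) (hI.preimage hf) :=
  NatIso.ofComponents (fun _ => Iso.refl _) (fun _ => rfl)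

lemma intervalFiber_mono {Q : Type} {I J : Set Q} {p : Q} (h : p ∈ I → p ∈ J) :
    intervalFiber k I p ≤ intervalFiber k J p :=
  fun _ hx hpJ => hx (mt h hpJ)

noncomputable def intervalModuleInclusion {I J : Set P} (hI : IsConvexIn I) (hJ : IsConvexIn J)
    (hIJ : I ⊆ J) (hup : ∀ ⦃p q⦄, p ≤ q → p ∈ I → q ∈ J → q ∈ I) :
    intervalModule k I hI ⟶ intervalModule k J hJ where
  app p := ModuleCat.ofHom (Submodule.inclusion (intervalFiber_mono k (@hIJ p)))
  naturality p q f := by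
    ext x
    apply Subtype.ext
    show (if q ∈ I then x.1 else 0) = (if q ∈ J then x.1 else 0)
    by_cases hqI : q ∈ I
    · rw [if_pos (hIJ hqI), if_pos hqI]
    · rw [if_neg hqI]
      by_cases hqJ : q ∈ J
      · rw [if_pos hqJ, x.2 fun hpI => hqI (hup f.le hpI hqJ)]
      · rw [if_neg hqJ]

variable {ι : Type} {S : Set P} {T : ι → Set P} {c : P → ι}

lemma isConvexIn_of_mem_iff (hS : IsConvexIn S) (hmem : ∀ z p, p ∈ T z ↔ p ∈ S ∧ c p = z)
    (hc : ∀ ⦃p q⦄, p ≤ q → p ∈ S → q ∈ S → c p = c q) (z : ι) : IsConvexIn (T z) := by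
  intro p x q hp hq hpx hxq
  rw [hmem] at hp hq ⊢
  have hx := hS hp.1 hq.1 hpx hxq
  exact ⟨hx, (hc hpx hp.1 hx).symm.trans hp.2⟩

noncomputable def intervalModuleFibreCofan (hS : IsConvexIn S)
    (hmem : ∀ z p, p ∈ T z ↔ p ∈ S ∧ c p = z)
    (hc : ∀ ⦃p q⦄, p ≤ q → p ∈ S → q ∈ S → c p = c q) :
    Cofan fun z => intervalModule k (T z) (isConvexIn_of_mem_iff hS hmem hc z) :=
  Cofan.mk (intervalModule k S hS) fun z =>
    intervalModuleInclusion k _ hS (fun p hp => ((hmem z p).1 hp).1)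
      fun p q hpq hp hq => by
        obtain ⟨hpS, rfl⟩ := (hmem z p).1 hp
        exact (hmem _ q).2 ⟨hq, (hc hpq hpS hq).symm⟩

noncomputable def isColimitIntervalModuleFibreCofan (hS : IsConvexIn S)
    (hmem : ∀ z p, p ∈ T z ↔ p ∈ S ∧ c p = z)
    (hc : ∀ ⦃p q⦄, p ≤ q → p ∈ S → q ∈ S → c p = c q) :
    IsColimit (intervalModuleFibreCofan k hS hmem hc) := by
  apply evaluationJointlyReflectsColimits
  intro p
  have hproj : p ∈ S → p ∈ T (c p) := fun hp => (hmem _ p).2 ⟨hp, rfl⟩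
  refine IsColimit.mk
    (fun s => ModuleCat.ofHom (Submodule.inclusion (intervalFiber_mono k hproj)) ≫ s.ι.app ⟨c p⟩)
    ?_ ?_
  · rintro s ⟨z⟩
    ext x
    by_cases hp : p ∈ T z
    · obtain rfl := ((hmem z p).1 hp).2
      rfl
    · rw [show x = 0 from Subtype.ext (x.2 hp)]
      simp only [map_zero]
  · intro s mf w
    ext x
    by_cases hp : p ∈ S
    · exact LinearMap.congr_fun (congrArg ModuleCat.Hom.hom (w ⟨c p⟩))
        (Submodule.inclusion (intervalFiber_mono k hproj) x)
    · rw [show x = 0 from Subtype.ext (x.2 hp)]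
      simp only [map_zero]

noncomputable def intervalModuleIsoSigmaFibres (hS : IsConvexIn S)
    (hmem : ∀ z p, p ∈ T z ↔ p ∈ S ∧ c p = z)
    (hc : ∀ ⦃p q⦄, p ≤ q → p ∈ S → q ∈ S → c p = c q) :
    intervalModule k S hS ≅
      ∐ fun z => intervalModule k (T z) (isConvexIn_of_mem_iff hS hmem hc z) :=
  (isColimitIntervalModuleFibreCofan k hS hmem hc).coconePointUniqueUpToIso (colimit.isColimit _)

end IntervalModuleDecomposition

lemma Int.mul_add_le_and_lt_iff {N i j z b : ℤ} (hN : 0 < N) (hi : 0 ≤ i) (hj : j < N) :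
    z * N + i ≤ b ∧ b < z * N + j + 1 ↔ (i ≤ b % N ∧ b % N ≤ j) ∧ b / N = z := by
  constructor
  · rintro ⟨hib, hbj⟩
    obtain ⟨hdiv, hmod⟩ :=
      (Int.ediv_emod_unique hN).2 ⟨(by ring : b - z * N + N * z = b), by linarith, by linarith⟩
    exact ⟨⟨by linarith, by linarith⟩, hdiv⟩
  · rintro ⟨⟨hib, hbj⟩, rfl⟩
    have hb := Int.emod_add_mul_ediv b N
    constructor <;> linarith [mul_comm N (b / N)]

lemma ZZ.b_le_of_le {p q : ZZ} (h : p ≤ q) : p.b ≤ q.b ∧ q.b ≤ p.b + 1 := by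
  have hp : p.a = p.b ∨ p.a = p.b + 1 := p.2
  have hq : q.a = q.b ∨ q.a = q.b + 1 := q.2
  have := ZZ.le_iff.1 h
  omega

section TopInterval
variable {n m : ℕ} (hn : 1 < n) (hm : 1 < m) {i j : Bipath n m}

lemma zeta_mem_Icc_iff (hi : 1 ≤ i.1) (hij : i.1 ≤ j.1) (hj : j.1 ≤ n - 1) (p : ZZ) :
    i ≤ zeta n m hn hm p ∧ zeta n m hn hm p ≤ j ↔
      (i.1 : ℤ) ≤ p.b % ((n : ℤ) + m - 1) ∧ p.b % ((n : ℤ) + m - 1) ≤ j.1 := by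
  have hab : p.a = p.b ∨ p.a = p.b + 1 := p.2
  have h0 : 0 ≤ p.b % ((n : ℤ) + m - 1) := Int.emod_nonneg _ (by omega)
  have h1 : p.b % ((n : ℤ) + m - 1) < (n : ℤ) + m - 1 := Int.emod_lt_of_pos _ (by omega)
  show bipathLE n i.1 (zetaFun n m p.a p.b) ∧ bipathLE n (zetaFun n m p.a p.b) j.1 ↔ _
  unfold zetaFun bipathLE
  generalize p.b % ((n : ℤ) + m - 1) = r at *
  split_ifs <;> omega

lemma mem_zzIco_iff_zeta_mem (hi : 1 ≤ i.1) (hij : i.1 ≤ j.1) (hj : j.1 ≤ n - 1) (z : ℤ)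
    (p : ZZ) :
    p ∈ zzIco (z * ((n : ℤ) + m - 1) + i.1) (z * ((n : ℤ) + m - 1) + j.1 + 1) ↔
      p ∈ zeta n m hn hm ⁻¹' {x | i ≤ x ∧ x ≤ j} ∧ p.b / ((n : ℤ) + m - 1) = z := by
  rw [Set.mem_preimage, Set.mem_ofPred_eq, zeta_mem_Icc_iff hn hm hi hij hj]
  exact Int.mul_add_le_and_lt_iff (by omega) (by omega) (by omega)

lemma ZZ.b_ediv_eq_of_le_of_zeta_mem (hi : 1 ≤ i.1) (hij : i.1 ≤ j.1) (hj : j.1 ≤ n - 1)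
    {p q : ZZ} (hpq : p ≤ q) (hp : i ≤ zeta n m hn hm p ∧ zeta n m hn hm p ≤ j) :
    p.b / ((n : ℤ) + m - 1) = q.b / ((n : ℤ) + m - 1) := by
  rw [zeta_mem_Icc_iff hn hm hi hij hj] at hp
  rcases ZZ.b_le_of_le hpq with ⟨hle, hle'⟩
  obtain hqp | hqp : q.b = p.b ∨ q.b = p.b + 1 := by omega
  · rw [hqp]
  · have hb := Int.emod_add_mul_ediv p.b ((n : ℤ) + m - 1)
    refine ((Int.ediv_emod_unique (r := p.b % ((n : ℤ) + m - 1) + 1) (by omega)).2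
      ⟨?_, ?_, ?_⟩).1.symm <;> omega

end TopInterval

/-- Restriction of a top-interval module along the covering map decomposes as
the direct sum over `k ∈ ℤ` of the interval modules `k[kN+i, kN+j+1)_ZZ`. -/
theorem restrict_top_interval (n m : ℕ) (hn : 1 < n) (hm : 1 < m)
    (k : Type) [Field k] (hz : Monotone (zeta n m hn hm))
    (i j : Bipath n m) (hi : 1 ≤ i.1) (hij : i.1 ≤ j.1) (hj : j.1 ≤ n - 1) :
    Nonempty ((restrictAlong k hz).obj
        (intervalModule k {z | i ≤ z ∧ z ≤ j} (isConvex_Icc i j)) ≅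
      ∐ fun z : ℤ =>
        intervalModule k (zzIco (z * ((n:ℤ)+m-1) + i.1) (z * ((n:ℤ)+m-1) + j.1 + 1))
          (zzIco_convex _ _)) :=
  ⟨restrictAlongIntervalModuleIso k hz _ _ ≪≫
    intervalModuleIsoSigmaFibres k _ (mem_zzIco_iff_zeta_mem hn hm hi hij hj)
      fun _ _ hpq hp _ => ZZ.b_ediv_eq_of_le_of_zeta_mem hn hm hi hij hj hpq hp⟩
end

section
/- Let [i,j]▷ = {z ∈ B : i ≤ z ≤ n} ∪ {z ∈ B : j ≤ z ≤ n} be a right interval of the bipath poset (i ∈ {1,...,n}, j ∈ {n+m−1,...,n+1,n}). Then the preimage ζ⁻¹([i,j]▷) is a disjoint union of ℤ-translates (by N) of a single finite interval [i,j']_ZZ of ZZ, where j' is the integer corresponding to j under ζ, and R(k[i,j]▷) ≅ ⊕_{k∈ℤ} k[kN+i, kN+j']_ZZ, the direct sum of the interval modules supported on these translates. -/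
open CategoryTheory CategoryTheory.Limits

open CategoryTheory CategoryTheory.Limits
open scoped Classical

/- ===== auxiliary lemmas ===== -/

lemma aux_le_one {N d c : ℤ} (hN : 0 < N) (h : N * d ≤ c) (hc : c ≤ N) : d ≤ 1 := by
  by_contra hcon
  push_neg at hcon
  have h2 : N * 2 ≤ N * d := mul_le_mul_of_nonneg_left (by omega) (by omega)
  linarith

lemma aux_le_zero {N d c : ℤ} (hN : 0 < N) (h : N * d ≤ c) (hc : c < N) : d ≤ 0 := by
  by_contra hcon
  push_neg at hcon
  have h2 : N * 1 ≤ N * d := mul_le_mul_of_nonneg_left (by omega) (by omega)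
  linarith

lemma aux_nonneg {N d c : ℤ} (hN : 0 < N) (h : c ≤ N * d) (hc : -N < c) : 0 ≤ d := by
  by_contra hcon
  push_neg at hcon
  have h2 : N * d ≤ N * (-1) := mul_le_mul_of_nonneg_left (by omega) (by omega)
  linarith

lemma ZZ.cases' (p : ZZ) : p.a = p.b ∨ p.a = p.b + 1 := p.2

lemma ZZ.b_le_a (p : ZZ) : p.b ≤ p.a := by
  rcases ZZ.cases' p with h | h <;> omega

lemma mem_zzIcc {a b : ℤ} {p : ZZ} : p ∈ zzIcc a b ↔ p.a ≤ b ∧ a ≤ p.b := Iff.rfl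

lemma mem_U_iff {n m : ℕ} {i j z : Bipath n m}
    (hi : 1 ≤ i.1) (hin : i.1 ≤ n) (hj : j.1 = n ∨ n + 1 ≤ j.1) :
    (i ≤ z ∨ j ≤ z) ↔ (i.1 ≤ z.1 ∧ z.1 ≤ j.1) := by
  have h1 := z.2; have h2 := j.2; have h3 := i.2
  show (bipathLE n i.1 z.1 ∨ bipathLE n j.1 z.1) ↔ _
  unfold bipathLE
  omega

lemma zeta_mem_iff (n m : ℕ) (hn : 1 < n) (hm : 1 < m) (p : ZZ) (i j : ℕ)
    (hi : 1 ≤ i) (hin : i ≤ n) (hjn : n ≤ j) (hjN : j ≤ n + m - 1) :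
    (i ≤ (zeta n m hn hm p).1 ∧ (zeta n m hn hm p).1 ≤ j) ↔
      ∃ z : ℤ, p.a ≤ z * ((n:ℤ)+m-1) + j ∧ z * ((n:ℤ)+m-1) + i ≤ p.b := by
  have hN : (0:ℤ) < (n:ℤ) + m - 1 := by omega
  have h0 := Int.emod_nonneg p.b (ne_of_gt hN)
  have h1 := Int.emod_lt_of_pos p.b hN
  have hq : ((n:ℤ)+m-1) * (p.b / ((n:ℤ)+m-1)) + p.b % ((n:ℤ)+m-1) = p.b :=
    Int.mul_ediv_add_emod _ _
  set q : ℤ := p.b / ((n:ℤ)+m-1) with hqdef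
  set r : ℤ := p.b % ((n:ℤ)+m-1) with hrdef
  have hval : (zeta n m hn hm p).1 = zetaFun n m p.a p.b := rfl
  have hiZ : (1:ℤ) ≤ (i:ℤ) := by omega
  have hinZ : (i:ℤ) ≤ (n:ℤ) := by omega
  have hjnZ : (n:ℤ) ≤ (j:ℤ) := by omega
  have hjZ : (j:ℤ) ≤ (n:ℤ)+m-1 := by omega
  rcases ZZ.cases' p with ha | ha
  · -- diagonal case
    have hv : (i ≤ zetaFun n m p.a p.b ∧ zetaFun n m p.a p.b ≤ j) ↔
        ((r = 0 ∧ (j:ℤ) = (n:ℤ)+m-1) ∨ ((i:ℤ) ≤ r ∧ r ≤ (j:ℤ))) := by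
      unfold zetaFun
      rw [← hrdef]
      split_ifs <;> omega
    rw [hval, hv]
    constructor
    · rintro (⟨h2, h3⟩ | ⟨h2, h3⟩)
      · refine ⟨q - 1, ?_, ?_⟩
        · have e : (q - 1) * ((n:ℤ)+m-1) = ((n:ℤ)+m-1) * q - ((n:ℤ)+m-1) := by ring
          linarith
        · have e : (q - 1) * ((n:ℤ)+m-1) = ((n:ℤ)+m-1) * q - ((n:ℤ)+m-1) := by ring
          linarith
      · refine ⟨q, ?_, ?_⟩
        · have e : q * ((n:ℤ)+m-1) = ((n:ℤ)+m-1) * q := mul_comm _ _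
          linarith
        · have e : q * ((n:ℤ)+m-1) = ((n:ℤ)+m-1) * q := mul_comm _ _
          linarith
    · rintro ⟨z, hz1, hz2⟩
      have k1 : ((n:ℤ)+m-1) * (q - z) ≤ (j:ℤ) - r := by
        have e : ((n:ℤ)+m-1) * (q - z) = ((n:ℤ)+m-1) * q - z * ((n:ℤ)+m-1) := by ring
        linarith
      have k2 : (i:ℤ) - r ≤ ((n:ℤ)+m-1) * (q - z) := by
        have e : ((n:ℤ)+m-1) * (q - z) = ((n:ℤ)+m-1) * q - z * ((n:ℤ)+m-1) := by ring
        linarith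
      have hd1 : q - z ≤ 1 := aux_le_one hN k1 (by omega)
      have hd0 : 0 ≤ q - z := aux_nonneg hN k2 (by omega)
      have hcase : q = z ∨ q = z + 1 := by omega
      rcases hcase with h | h
      · have e0 : ((n:ℤ)+m-1) * (q - z) = 0 := by rw [h]; ring
        exact Or.inr ⟨by linarith, by linarith⟩
      · have e0 : ((n:ℤ)+m-1) * (q - z) = ((n:ℤ)+m-1) := by rw [h]; ring
        have hr0 : r ≤ 0 := by linarith
        exact Or.inl ⟨by omega, by linarith⟩
  · -- off-diagonal case
    have hv : (i ≤ zetaFun n m p.a p.b ∧ zetaFun n m p.a p.b ≤ j) ↔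
        ((i:ℤ) ≤ r ∧ r + 1 ≤ (j:ℤ)) := by
      unfold zetaFun
      rw [← hrdef]
      split_ifs <;> omega
    rw [hval, hv]
    constructor
    · rintro ⟨h2, h3⟩
      refine ⟨q, ?_, ?_⟩
      · have e : q * ((n:ℤ)+m-1) = ((n:ℤ)+m-1) * q := mul_comm _ _
        linarith
      · have e : q * ((n:ℤ)+m-1) = ((n:ℤ)+m-1) * q := mul_comm _ _
        linarith
    · rintro ⟨z, hz1, hz2⟩
      have k1 : ((n:ℤ)+m-1) * (q - z) ≤ (j:ℤ) - r - 1 := by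
        have e : ((n:ℤ)+m-1) * (q - z) = ((n:ℤ)+m-1) * q - z * ((n:ℤ)+m-1) := by ring
        linarith
      have k2 : (i:ℤ) - r ≤ ((n:ℤ)+m-1) * (q - z) := by
        have e : ((n:ℤ)+m-1) * (q - z) = ((n:ℤ)+m-1) * q - z * ((n:ℤ)+m-1) := by ring
        linarith
      have hd1 : q - z ≤ 0 := aux_le_zero hN k1 (by omega)
      have hd0 : 0 ≤ q - z := aux_nonneg hN k2 (by omega)
      have h : q = z := by omega
      have e0 : ((n:ℤ)+m-1) * (q - z) = 0 := by rw [h]; ring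
      exact ⟨by linarith, by linarith⟩

lemma preimage_union (n m : ℕ) (hn : 1 < n) (hm : 1 < m)
    (i j : Bipath n m) (hi : 1 ≤ i.1) (hin : i.1 ≤ n) (hj : j.1 = n ∨ n + 1 ≤ j.1) :
    zeta n m hn hm ⁻¹' {z | i ≤ z ∨ j ≤ z} =
      ⋃ z : ℤ, zzIcc (z * ((n:ℤ)+m-1) + i.1) (z * ((n:ℤ)+m-1) + j.1) := by
  have hjn : n ≤ j.1 := by omega
  have hjN : j.1 ≤ n + m - 1 := by have := j.2; omega
  ext p
  simp only [Set.mem_preimage, Set.mem_setOf_eq, Set.mem_iUnion]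
  rw [mem_U_iff hi hin hj]
  rw [zeta_mem_iff n m hn hm p i.1 j.1 hi hin hjn hjN]
  exact Iff.rfl

lemma mem_zzIcc_unique {n m : ℕ} (hn : 1 < n) (hm : 1 < m) {i j : ℕ}
    (hi : 1 ≤ i) (hij : i ≤ j) (hjN : j ≤ n + m - 1) {p q : ZZ} {z w : ℤ}
    (hpq : p ≤ q)
    (hp : p ∈ zzIcc (z * ((n:ℤ)+m-1) + i) (z * ((n:ℤ)+m-1) + j))
    (hq : q ∈ zzIcc (w * ((n:ℤ)+m-1) + i) (w * ((n:ℤ)+m-1) + j)) : z = w := by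
  obtain ⟨h1, h2⟩ := hp; obtain ⟨h3, h4⟩ := hq
  obtain ⟨h5, h6⟩ := ZZ.le_iff.1 hpq
  have hba := ZZ.b_le_a p; have hba' := ZZ.b_le_a q
  have hN : (0:ℤ) < (n:ℤ)+m-1 := by omega
  have hiZ : (1:ℤ) ≤ (i:ℤ) := by omega
  have hjZ : (j:ℤ) ≤ (n:ℤ)+m-1 := by omega
  have hijZ : (i:ℤ) ≤ (j:ℤ) := by omega
  have k1 : ((n:ℤ)+m-1) * (z - w) ≤ (j:ℤ) - i := by
    have e : ((n:ℤ)+m-1) * (z-w) = z*((n:ℤ)+m-1) - w*((n:ℤ)+m-1) := by ring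
    linarith
  have k2 : ((n:ℤ)+m-1) * (w - z) ≤ (j:ℤ) - i := by
    have e : ((n:ℤ)+m-1) * (w-z) = w*((n:ℤ)+m-1) - z*((n:ℤ)+m-1) := by ring
    linarith
  have hzw : z - w ≤ 0 := aux_le_zero hN k1 (by omega)
  have hwz : w - z ≤ 0 := aux_le_zero hN k2 (by omega)
  omega

lemma translate_image (N z a b : ℤ) :
    ZZ.translate N z '' zzIcc a b = zzIcc (z * N + a) (z * N + b) := by
  ext p
  constructor
  · rintro ⟨q, ⟨hq1, hq2⟩, rfl⟩
    constructor
    · show q.a + z * N ≤ z * N + b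
      omega
    · show z * N + a ≤ q.b + z * N
      omega
  · rintro ⟨h1, h2⟩
    refine ⟨ZZ.translate N (-z) p, ⟨?_, ?_⟩, ?_⟩
    · show p.a + (-z) * N ≤ b
      have e : (-z) * N = -(z * N) := by ring
      omega
    · show a ≤ p.b + (-z) * N
      have e : (-z) * N = -(z * N) := by ring
      omega
    · apply Subtype.ext
      apply Prod.ext
      · show OrderDual.toDual (p.a + (-z) * N + z * N) = p.1.1
        have e : p.a + (-z) * N + z * N = p.a := by ring
        rw [e]
        rfl
      · show p.b + (-z) * N + z * N = p.1.2
        have e : p.b + (-z) * N + z * N = p.b := by ring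
        rw [e]
        rfl

lemma zzIcc_finite (a b : ℤ) : (zzIcc a b).Finite := by
  have hsub : zzIcc a b ⊆ (fun p : ZZ => ((p.a : ℤ), p.b)) ⁻¹' (Set.Icc a b ×ˢ Set.Icc a b) := by
    rintro p ⟨h1, h2⟩
    have hba := ZZ.b_le_a p
    simp only [Set.mem_preimage, Set.mem_prod, Set.mem_Icc]
    exact ⟨⟨by omega, by omega⟩, ⟨by omega, by omega⟩⟩
  refine Set.Finite.subset (Set.Finite.preimage ?_ ((Set.finite_Icc a b).prod (Set.finite_Icc a b))) hsub
  intro p _ q _ h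
  apply Subtype.ext
  apply Prod.ext
  · exact (Prod.ext_iff.1 h).1
  · exact (Prod.ext_iff.1 h).2

section CoprodDecomp

variable (k : Type) [Field k] {P Q : Type} [Preorder P] [Preorder Q]

/-- A "cross" map between interval fibers over possibly different posets. -/
noncomputable def fiberHom (I : Set P) (J : Set Q) (p : P) (q : Q) :
    intervalFiber k I p →ₗ[k] intervalFiber k J q where
  toFun x := ⟨if q ∈ J then x.1 else 0, fun h => if_neg h⟩
  map_add' x y := by apply Subtype.ext; by_cases h : q ∈ J <;> simp [h]
  map_smul' c x := by apply Subtype.ext; by_cases h : q ∈ J <;> simp [h]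

variable {f : P → Q} (hf : Monotone f) (U : Set Q) (hU : IsConvexIn U)
variable {ι : Type} (I : ι → Set P) (hI : ∀ z, IsConvexIn (I z))

/-- The injection of an interval module on `I z` into the restricted interval
module, when the `I z` decompose the preimage of `U`. -/
noncomputable def injNat
    (h1 : ∀ p : P, f p ∈ U ↔ ∃ z, p ∈ I z)
    (h3 : ∀ (p q : P) (z w : ι), p ≤ q → p ∈ I z → q ∈ I w → z = w) (z : ι) :
    intervalModule k (I z) (hI z) ⟶ (restrictAlong k hf).obj (intervalModule k U hU) where
  app p := ModuleCat.ofHom (fiberHom k (I z) U p (f p))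
  naturality p q g := by
    apply ModuleCat.hom_ext
    apply LinearMap.ext
    intro x
    apply Subtype.ext
    show (if f q ∈ U then (if q ∈ I z then x.1 else 0) else 0)
        = (if f q ∈ U then (if f p ∈ U then x.1 else 0) else 0)
    by_cases hq : f q ∈ U
    · rw [if_pos hq, if_pos hq]
      by_cases hp : p ∈ I z
      · have hfp : f p ∈ U := (h1 p).2 ⟨z, hp⟩
        have hqz : q ∈ I z := by
          obtain ⟨w, hw⟩ := (h1 q).1 hq
          obtain rfl := h3 p q z w g.le hp hw
          exact hw
        rw [if_pos hqz, if_pos hfp]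
      · have hx : x.1 = 0 := x.2 hp
        rw [hx]
        simp
    · rw [if_neg hq, if_neg hq]

/-- The descent map out of the restricted interval module. -/
noncomputable def descApp
    (t : Cofan (fun z : ι => intervalModule k (I z) (hI z))) (p : P) :
    ((restrictAlong k hf).obj (intervalModule k U hU)).obj p ⟶ t.pt.obj p :=
  if h : ∃ z, p ∈ I z then
    (ModuleCat.ofHom (fiberHom k U (I h.choose) (f p) p) ≫ (t.inj h.choose).app p :
      ((restrictAlong k hf).obj (intervalModule k U hU)).obj p ⟶ t.pt.obj p)
  else 0

lemma descApp_eq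
    (h3 : ∀ (p q : P) (z w : ι), p ≤ q → p ∈ I z → q ∈ I w → z = w)
    (t : Cofan (fun z : ι => intervalModule k (I z) (hI z))) (p : P)
    (z : ι) (hz : p ∈ I z) (x : ((restrictAlong k hf).obj (intervalModule k U hU)).obj p) :
    descApp k hf U hU I hI t p x = (t.inj z).app p (fiberHom k U (I z) (f p) p x) := by
  have hex : ∃ w, p ∈ I w := ⟨z, hz⟩
  obtain rfl : hex.choose = z := h3 p p hex.choose z le_rfl hex.choose_spec hz
  show descApp k hf U hU I hI t p x = _
  rw [descApp, dif_pos hex]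
  rfl

lemma descApp_zero
    (t : Cofan (fun z : ι => intervalModule k (I z) (hI z))) (p : P)
    (hp : ¬ ∃ z, p ∈ I z) (x : ((restrictAlong k hf).obj (intervalModule k U hU)).obj p) :
    descApp k hf U hU I hI t p x = 0 := by
  rw [descApp, dif_neg hp]
  rfl

/-- The descent natural transformation. -/
noncomputable def descNat
    (h1 : ∀ p : P, f p ∈ U ↔ ∃ z, p ∈ I z)
    (h3 : ∀ (p q : P) (z w : ι), p ≤ q → p ∈ I z → q ∈ I w → z = w)
    (t : Cofan (fun z : ι => intervalModule k (I z) (hI z))) :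
    (restrictAlong k hf).obj (intervalModule k U hU) ⟶ t.pt where
  app p := descApp k hf U hU I hI t p
  naturality p q g := by
    apply ModuleCat.hom_ext
    apply LinearMap.ext
    intro x
    show descApp k hf U hU I hI t q
        (((restrictAlong k hf).obj (intervalModule k U hU)).map g x)
      = t.pt.map g (descApp k hf U hU I hI t p x)
    by_cases hp : ∃ z, p ∈ I z
    · obtain ⟨z0, hz0⟩ := hp
      have hfp : f p ∈ U := (h1 p).2 ⟨z0, hz0⟩
      rw [descApp_eq k hf U hU I hI h3 t p z0 hz0]
      by_cases hq2 : q ∈ I z0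
      · have hfq : f q ∈ U := (h1 q).2 ⟨z0, hq2⟩
        rw [descApp_eq k hf U hU I hI h3 t q z0 hq2]
        have hnat := LinearMap.congr_fun
          (congrArg ModuleCat.Hom.hom ((t.inj z0).naturality g)) (fiberHom k U (I z0) (f p) p x)
        refine Eq.trans (congrArg ((t.inj z0).app q) (Subtype.ext ?_)) hnat
        show (if q ∈ I z0 then
            ((((restrictAlong k hf).obj (intervalModule k U hU)).map g x).1) else 0)
          = (if q ∈ I z0 then (if p ∈ I z0 then x.1 else 0) else 0)
        rw [if_pos hq2, if_pos hq2, if_pos hz0]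
        show (if f q ∈ U then x.1 else 0) = x.1
        rw [if_pos hfq]
      · have hfq : f q ∉ U := by
          intro hfq
          obtain ⟨w, hw⟩ := (h1 q).1 hfq
          obtain rfl := h3 p q z0 w g.le hz0 hw
          exact hq2 hw
        have hnoq : ¬ ∃ w, q ∈ I w := fun ⟨w, hw⟩ => hfq ((h1 q).2 ⟨w, hw⟩)
        rw [descApp_zero k hf U hU I hI t q hnoq]
        have hnat := LinearMap.congr_fun
          (congrArg ModuleCat.Hom.hom ((t.inj z0).naturality g)) (fiberHom k U (I z0) (f p) p x)
        have e0 : (intervalModule k (I z0) (hI z0)).map g (fiberHom k U (I z0) (f p) p x)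
            = 0 := by
          apply Subtype.ext
          show (if q ∈ I z0 then _ else 0) = _
          rw [if_neg hq2]
          rfl
        have hz : ((t.inj z0).app q)
            ((intervalModule k (I z0) (hI z0)).map g (fiberHom k U (I z0) (f p) p x)) = 0 := by
          rw [e0]
          simp only [map_zero]
        exact (hz.symm.trans hnat)
    · have hfp : f p ∉ U := fun h => hp ((h1 p).1 h)
      have hx : x = 0 := Subtype.ext (x.2 hfp)
      rw [hx]
      simp only [map_zero]

/-- Main decomposition: if the preimage of a convex set `U` under a monotone
map decomposes as a "disjoint union" of convex sets `I z` (disjoint even along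
comparabilities), then the restriction of the interval module on `U` is the
coproduct of the interval modules on the `I z`. -/
lemma restrict_iso_coprod
    (h1 : ∀ p : P, f p ∈ U ↔ ∃ z, p ∈ I z)
    (h3 : ∀ (p q : P) (z w : ι), p ≤ q → p ∈ I z → q ∈ I w → z = w)
    [HasCoproduct (fun z : ι => intervalModule k (I z) (hI z))] :
    Nonempty ((restrictAlong k hf).obj (intervalModule k U hU) ≅
      ∐ fun z : ι => intervalModule k (I z) (hI z)) := by
  let c : Cofan (fun z : ι => intervalModule k (I z) (hI z)) :=
    Cofan.mk ((restrictAlong k hf).obj (intervalModule k U hU))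
      (injNat k hf U hU I hI h1 h3)
  have hcolim : IsColimit c := by
    refine mkCofanColimit c (fun t => descNat k hf U hU I hI h1 h3 t) ?_ ?_
    · intro t z
      apply NatTrans.ext
      funext p
      apply ModuleCat.hom_ext
      apply LinearMap.ext
      intro x
      show descApp k hf U hU I hI t p ((injNat k hf U hU I hI h1 h3 z).app p x)
          = (t.inj z).app p x
      by_cases hpz : p ∈ I z
      · have hfp : f p ∈ U := (h1 p).2 ⟨z, hpz⟩
        rw [descApp_eq k hf U hU I hI h3 t p z hpz]
        refine congrArg ((t.inj z).app p) (Subtype.ext ?_)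
        show (if p ∈ I z then (if f p ∈ U then x.1 else 0) else 0) = x.1
        rw [if_pos hpz, if_pos hfp]
      · have hx : x = 0 := Subtype.ext (x.2 hpz)
        rw [hx]
        simp only [map_zero]
    · intro t mm hmm
      apply NatTrans.ext
      funext p
      apply ModuleCat.hom_ext
      apply LinearMap.ext
      intro x
      show mm.app p x = descApp k hf U hU I hI t p x
      by_cases hp : ∃ z, p ∈ I z
      · obtain ⟨z0, hz0⟩ := hp
        have hfp : f p ∈ U := (h1 p).2 ⟨z0, hz0⟩
        have hxe : x = (injNat k hf U hU I hI h1 h3 z0).app p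
            ⟨x.1, fun h => absurd hz0 h⟩ := by
          apply Subtype.ext
          show x.1 = if f p ∈ U then x.1 else 0
          rw [if_pos hfp]
        have step1 : mm.app p x = (t.inj z0).app p ⟨x.1, fun h => absurd hz0 h⟩ := by
          conv_lhs => rw [hxe]
          exact LinearMap.congr_fun (congrArg ModuleCat.Hom.hom (NatTrans.congr_app (hmm z0) p))
            ⟨x.1, fun h => absurd hz0 h⟩
        rw [step1, descApp_eq k hf U hU I hI h3 t p z0 hz0]
        refine congrArg ((t.inj z0).app p) (Subtype.ext ?_)
        show x.1 = if p ∈ I z0 then x.1 else 0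
        rw [if_pos hz0]
      · have hfp : f p ∉ U := fun h => hp ((h1 p).1 h)
        have hx : x = 0 := Subtype.ext (x.2 hfp)
        rw [hx, descApp_zero k hf U hU I hI t p hp]
        simp only [map_zero]
  exact ⟨(colimit.isoColimitCocone ⟨c, hcolim⟩).symm⟩

end CoprodDecomp


/-- Restriction of a right-interval module: the preimage `ζ⁻¹([i,j]▷)` is the
disjoint union of the `ℤ`-translates (by `N`) of a single finite interval of
`ZZ`, and `R(k[i,j]▷)` decomposes as the direct sum of the interval modules
supported on these translates. -/
theorem restrict_right_interval (n m : ℕ) (hn : 1 < n) (hm : 1 < m)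
    (k : Type) [Field k] (hz : Monotone (zeta n m hn hm))
    (i j : Bipath n m) (hi : 1 ≤ i.1) (hin : i.1 ≤ n) (hj : j.1 = n ∨ n + 1 ≤ j.1) :
    (zeta n m hn hm ⁻¹' {z | i ≤ z ∨ j ≤ z} =
        ⋃ z : ℤ, zzIcc (z * ((n:ℤ)+m-1) + i.1) (z * ((n:ℤ)+m-1) + j.1)) ∧
    (∀ z w : ℤ, z ≠ w →
      Disjoint (zzIcc (z * ((n:ℤ)+m-1) + i.1) (z * ((n:ℤ)+m-1) + j.1))
        (zzIcc (w * ((n:ℤ)+m-1) + i.1) (w * ((n:ℤ)+m-1) + j.1))) ∧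
    (∀ z : ℤ, zzIcc (z * ((n:ℤ)+m-1) + i.1) (z * ((n:ℤ)+m-1) + j.1) =
        ZZ.translate ((n:ℤ)+m-1) z '' zzIcc (i.1 : ℤ) (j.1 : ℤ)) ∧
    ((zzIcc (i.1 : ℤ) (j.1 : ℤ)).Finite) ∧
    Nonempty ((restrictAlong k hz).obj
        (intervalModule k {z | i ≤ z ∨ j ≤ z} (isConvex_upper2 i j)) ≅
      ∐ fun z : ℤ =>
        intervalModule k (zzIcc (z * ((n:ℤ)+m-1) + i.1) (z * ((n:ℤ)+m-1) + j.1))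
          (zzIcc_convex _ _)) := by
  have hjn : n ≤ j.1 := by omega
  have hjN : j.1 ≤ n + m - 1 := by have := j.2; omega
  have hij : i.1 ≤ j.1 := le_trans hin hjn
  have hset := preimage_union n m hn hm i j hi hin hj
  refine ⟨hset, ?_, ?_, zzIcc_finite _ _, ?_⟩
  · intro z w hzw
    rw [Set.disjoint_left]
    intro p hp hq
    exact hzw (mem_zzIcc_unique hn hm hi hij hjN le_rfl hp hq)
  · intro z
    exact (translate_image _ _ _ _).symm
  · refine restrict_iso_coprod k hz _ (isConvex_upper2 i j)
      (fun z : ℤ => zzIcc (z * ((n:ℤ)+m-1) + i.1) (z * ((n:ℤ)+m-1) + j.1))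
      (fun z => zzIcc_convex _ _) ?_ ?_
    · intro p
      have := Set.ext_iff.1 hset p
      simpa [Set.mem_iUnion] using this
    · intro p q z w hpq hp hq
      exact mem_zzIcc_unique hn hm hi hij hjN hpq hp hq
end

section
/- Let I be an interval of the bipath poset B other than the full interval B. Then the preimage ζ⁻¹(I) ⊆ ZZ is a disjoint union of intervals of ZZ, indexed by k ∈ ℤ, where the (k+1)-st is the translate of the k-th by N = n+m−1 (adding N to both coordinates); in particular each connected component of ζ⁻¹(I) is finite. -/
open CategoryTheory CategoryTheory.Limits

open CategoryTheory CategoryTheory.Limits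
open scoped Classical

/-! ### Auxiliary development for the main theorem -/

section MainAux

/-- Extensionality for points of the zigzag. -/
lemma zz_ext (p q : ZZ) (ha : p.a = q.a) (hb : p.b = q.b) : p = q := by
  apply Subtype.ext
  exact Prod.ext_iff.mpr ⟨ha, hb⟩

/-- The diagonal point `(b,b)` of the zigzag. -/
def zzdiag (b : ℤ) : ZZ := ⟨(OrderDual.toDual b, b), Or.inl rfl⟩

/-- The offset point `(b+1,b)` of the zigzag. -/
def zzoff (b : ℤ) : ZZ := ⟨(OrderDual.toDual (b + 1), b), Or.inr rfl⟩

@[simp] lemma zzdiag_a (b : ℤ) : (zzdiag b).a = b := rfl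
@[simp] lemma zzdiag_b (b : ℤ) : (zzdiag b).b = b := rfl
@[simp] lemma zzoff_a (b : ℤ) : (zzoff b).a = b + 1 := rfl
@[simp] lemma zzoff_b (b : ℤ) : (zzoff b).b = b := rfl

/-- In the zigzag, any point between two points equals one of them. -/
lemma zz_between {p z q : ZZ} (hpz : p ≤ z) (hzq : z ≤ q) : z = p ∨ z = q := by
  obtain ⟨h1, h2⟩ := ZZ.le_iff.1 hpz
  obtain ⟨h3, h4⟩ := ZZ.le_iff.1 hzq
  have hp' : p.a = p.b ∨ p.a = p.b + 1 := p.2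
  have hq' : q.a = q.b ∨ q.a = q.b + 1 := q.2
  have hz' : z.a = z.b ∨ z.a = z.b + 1 := z.2
  have : (z.a = p.a ∧ z.b = p.b) ∨ (z.a = q.a ∧ z.b = q.b) := by omega
  rcases this with ⟨e1, e2⟩ | ⟨e1, e2⟩
  · exact Or.inl (zz_ext _ _ e1 e2)
  · exact Or.inr (zz_ext _ _ e1 e2)

/-- Every subset of the zigzag is convex. -/
lemma zz_convex (S : Set ZZ) : IsConvexIn S := by
  intro p z q hp hq hpz hzq
  rcases zz_between hpz hzq with h | h
  · rwa [h]
  · rwa [h]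

/-- The "unfolded position" of a zigzag point along the covering of the cycle. -/
def ellf (n m : ℕ) (p : ZZ) : ℤ :=
  if p.a = p.b then p.b + (p.b - 1) / ((n : ℤ) + m - 1)
  else p.b + (p.b + m - 1) / ((n : ℤ) + m - 1)

lemma ellf_diag (n m : ℕ) (b : ℤ) :
    ellf n m (zzdiag b) = b + (b - 1) / ((n : ℤ) + m - 1) := by
  unfold ellf
  rw [if_pos (show (zzdiag b).a = (zzdiag b).b from rfl)]
  rfl

lemma ellf_off (n m : ℕ) (b : ℤ) :
    ellf n m (zzoff b) = b + (b + m - 1) / ((n : ℤ) + m - 1) := by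
  unfold ellf
  rw [if_neg (show ¬ (zzoff b).a = (zzoff b).b from fun h => by
    have h' : b + 1 = b := h; omega)]
  rfl

lemma ediv_helper (N x q v : ℤ) (hN : 0 < N) (h : x = N * q + v)
    (h0 : 0 ≤ v) (h1 : v < N) : x / N = q :=
  ((Int.ediv_emod_unique hN).2 ⟨by rw [h]; ring, h0, h1⟩).1

lemma emod_helper (C x q v : ℤ) (hC : 0 < C) (h : x = C * q + v)
    (h0 : 0 ≤ v) (h1 : v < C) : x % C = v := by
  rw [h, show C * q + v = v + C * q by ring, Int.add_mul_emod_self_left,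
    Int.emod_eq_of_lt h0 h1]

/-- The value of `ζ` is the unfolded position reduced mod `n + m`. -/
lemma zeta_val_eq (n m : ℕ) (hn : 1 < n) (hm : 1 < m) (p : ZZ) :
    (zetaFun n m p.a p.b : ℤ) = ellf n m p % ((n : ℤ) + m) := by
  have hC : (0:ℤ) < (n:ℤ) + m := by omega
  have hN : (0:ℤ) < (n:ℤ) + m - 1 := by omega
  obtain ⟨q, r, hqr, hr0, hr1, hrdef⟩ :
      ∃ q r : ℤ, p.b = ((n:ℤ)+m-1) * q + r ∧ 0 ≤ r ∧ r < (n:ℤ)+m-1 ∧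
        p.b % ((n:ℤ)+m-1) = r :=
    ⟨_, _, (Int.mul_ediv_add_emod _ _).symm, Int.emod_nonneg _ (by omega),
      Int.emod_lt_of_pos _ hN, rfl⟩
  rcases p.2 with ha0 | ha0
  · have ha : p.a = p.b := ha0
    by_cases h0 : r = 0
    · have hdiv : (p.b - 1) / ((n:ℤ)+m-1) = q - 1 :=
        ediv_helper _ _ _ ((n:ℤ)+m-2) hN (by linear_combination hqr + h0)
          (by omega) (by omega)
      have hval : ellf n m p % ((n:ℤ)+m) = (n:ℤ)+m-1 := by
        unfold ellf
        rw [if_pos ha, hdiv]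
        exact emod_helper _ _ (q-1) _ hC (by linear_combination hqr + h0)
          (by omega) (by omega)
      rw [hval]
      unfold zetaFun
      rw [hrdef]
      split_ifs <;> omega
    · have hdiv : (p.b - 1) / ((n:ℤ)+m-1) = q :=
        ediv_helper _ _ _ (r - 1) hN (by linear_combination hqr) (by omega) (by omega)
      have hval : ellf n m p % ((n:ℤ)+m) = r := by
        unfold ellf
        rw [if_pos ha, hdiv]
        exact emod_helper _ _ q _ hC (by linear_combination hqr) (by omega) (by omega)
      rw [hval]
      unfold zetaFun
      rw [hrdef]
      split_ifs <;> omega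
  · have ha : p.a = p.b + 1 := ha0
    have hanot : ¬ p.a = p.b := by omega
    by_cases hcase : r ≤ (n:ℤ) - 1
    · have hdiv : (p.b + m - 1) / ((n:ℤ)+m-1) = q :=
        ediv_helper _ _ _ (r + m - 1) hN (by linear_combination hqr) (by omega) (by omega)
      have hval : ellf n m p % ((n:ℤ)+m) = r := by
        unfold ellf
        rw [if_neg hanot, hdiv]
        exact emod_helper _ _ q _ hC (by linear_combination hqr) (by omega) (by omega)
      rw [hval]
      unfold zetaFun
      rw [hrdef]
      split_ifs <;> omega
    · have hdiv : (p.b + m - 1) / ((n:ℤ)+m-1) = q + 1 :=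
        ediv_helper _ _ _ (r - n) hN (by linear_combination hqr) (by omega) (by omega)
      have hval : ellf n m p % ((n:ℤ)+m) = r + 1 := by
        unfold ellf
        rw [if_neg hanot, hdiv]
        exact emod_helper _ _ q _ hC (by linear_combination hqr) (by omega) (by omega)
      rw [hval]
      unfold zetaFun
      rw [hrdef]
      split_ifs <;> omega

/-- Translating by the period shifts the unfolded position by `n + m`. -/
lemma ellf_translate (n m : ℕ) (hn : 1 < n) (hm : 1 < m) (p : ZZ) :
    ellf n m (ZZ.translate ((n:ℤ)+m-1) 1 p) = ellf n m p + ((n:ℤ)+m) := by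
  have hN : ((n:ℤ)+m-1) ≠ 0 := by omega
  have ha : (ZZ.translate ((n:ℤ)+m-1) 1 p).a = p.a + 1*((n:ℤ)+m-1) := rfl
  have hb : (ZZ.translate ((n:ℤ)+m-1) 1 p).b = p.b + 1*((n:ℤ)+m-1) := rfl
  unfold ellf
  rw [ha, hb]
  by_cases hc : p.a = p.b
  · rw [if_pos (show p.a + 1*((n:ℤ)+m-1) = p.b + 1*((n:ℤ)+m-1) by omega), if_pos hc,
      show p.b + 1*((n:ℤ)+m-1) - 1 = (p.b - 1) + 1*((n:ℤ)+m-1) by ring,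
      Int.add_mul_ediv_right _ _ hN]
    ring
  · rw [if_neg (show ¬ p.a + 1*((n:ℤ)+m-1) = p.b + 1*((n:ℤ)+m-1) by omega), if_neg hc,
      show p.b + 1*((n:ℤ)+m-1) + m - 1 = (p.b + m - 1) + 1*((n:ℤ)+m-1) by ring,
      Int.add_mul_ediv_right _ _ hN]
    ring

lemma translate_one_inv (N : ℤ) (p : ZZ) :
    ZZ.translate N 1 (ZZ.translate N (-1) p) = p := by
  apply zz_ext
  · show p.a + -1*N + 1*N = p.a
    ring
  · show p.b + -1*N + 1*N = p.b
    ring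

/-- The unfolded position map is surjective. -/
lemma ellf_surj (n m : ℕ) (hn : 1 < n) (hm : 1 < m) (x : ℤ) :
    ∃ p : ZZ, ellf n m p = x := by
  have hC : (0:ℤ) < (n:ℤ)+m := by omega
  have hN : ((n:ℤ)+m-1) ≠ 0 := by omega
  obtain ⟨z, r, hzr, hr0, hr1⟩ :
      ∃ z r : ℤ, x = ((n:ℤ)+m) * z + r ∧ 0 ≤ r ∧ r < (n:ℤ)+m :=
    ⟨_, _, (Int.mul_ediv_add_emod _ _).symm, Int.emod_nonneg _ (by omega),
      Int.emod_lt_of_pos _ hC⟩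
  by_cases h0 : r = 0
  · refine ⟨zzoff (z * ((n:ℤ)+m-1)), ?_⟩
    rw [ellf_off, show z*((n:ℤ)+m-1) + m - 1 = ((m:ℤ) - 1) + z*((n:ℤ)+m-1) by ring,
      Int.add_mul_ediv_right _ _ hN, Int.ediv_eq_zero_of_lt (by omega) (by omega)]
    linear_combination -hzr - h0
  · refine ⟨zzdiag (z * ((n:ℤ)+m-1) + r), ?_⟩
    rw [ellf_diag, show z*((n:ℤ)+m-1) + r - 1 = (r - 1) + z*((n:ℤ)+m-1) by ring,
      Int.add_mul_ediv_right _ _ hN, Int.ediv_eq_zero_of_lt (by omega) (by omega)]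
    linear_combination -hzr

/-- Integer parametrization of the zigzag: index of a point. -/
def zzidx (p : ZZ) : ℤ := if p.a = p.b then 2 * p.b else 2 * p.b + 1

/-- Integer parametrization of the zigzag: point with a given index. -/
def zzpt (t : ℤ) : ZZ := if t % 2 = 0 then zzdiag (t / 2) else zzoff (t / 2)

lemma zzpt_zzidx (p : ZZ) : zzpt (zzidx p) = p := by
  rcases p.2 with ha | ha
  · have ha' : p.a = p.b := ha
    have h1 : zzidx p = 2 * p.b := by unfold zzidx; exact if_pos ha'
    rw [h1]
    unfold zzpt
    rw [if_pos (by omega : (2 * p.b) % 2 = 0), show (2 * p.b) / 2 = p.b by omega]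
    exact zz_ext _ _ ha'.symm rfl
  · have ha0 : p.a = p.b + 1 := ha
    have ha' : ¬ p.a = p.b := by omega
    have h1 : zzidx p = 2 * p.b + 1 := by unfold zzidx; exact if_neg ha'
    rw [h1]
    unfold zzpt
    rw [if_neg (by omega : ¬ (2 * p.b + 1) % 2 = 0),
      show (2 * p.b + 1) / 2 = p.b by omega]
    exact zz_ext _ _ ha0.symm rfl

lemma zzidx_inj : Function.Injective zzidx := by
  intro p q h
  unfold zzidx at h
  rcases p.2 with hp | hp <;> rcases q.2 with hq | hq
  · have hp' : p.a = p.b := hp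
    have hq' : q.a = q.b := hq
    rw [if_pos hp', if_pos hq'] at h
    exact zz_ext _ _ (by omega) (by omega)
  · have hp' : p.a = p.b := hp
    have hq0 : q.a = q.b + 1 := hq
    rw [if_pos hp', if_neg (by omega : ¬ q.a = q.b)] at h
    exfalso; omega
  · have hp0 : p.a = p.b + 1 := hp
    have hq' : q.a = q.b := hq
    rw [if_neg (by omega : ¬ p.a = p.b), if_pos hq'] at h
    exfalso; omega
  · have hp0 : p.a = p.b + 1 := hp
    have hq0 : q.a = q.b + 1 := hq
    rw [if_neg (by omega : ¬ p.a = p.b), if_neg (by omega : ¬ q.a = q.b)] at h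
    exact zz_ext _ _ (by omega) (by omega)

/-- Consecutive points of the zigzag parametrization are comparable. -/
lemma zzpt_comp (t : ℤ) : zzpt t ≤ zzpt (t+1) ∨ zzpt (t+1) ≤ zzpt t := by
  by_cases h : t % 2 = 0
  · right
    have e1 : zzpt t = zzdiag (t/2) := by unfold zzpt; rw [if_pos h]
    have e2 : zzpt (t+1) = zzoff (t/2) := by
      unfold zzpt
      rw [if_neg (by omega : ¬ (t+1) % 2 = 0), show (t+1)/2 = t/2 by omega]
    rw [e1, e2]
    exact ZZ.le_iff.2 ⟨by show t/2 ≤ t/2 + 1; omega, by show t/2 ≤ t/2; omega⟩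
  · left
    have e1 : zzpt t = zzoff (t/2) := by unfold zzpt; rw [if_neg h]
    have e2 : zzpt (t+1) = zzdiag (t/2 + 1) := by
      unfold zzpt
      rw [if_pos (by omega : (t+1) % 2 = 0), show (t+1)/2 = t/2 + 1 by omega]
    rw [e1, e2]
    exact ZZ.le_iff.2 ⟨by show t/2 + 1 ≤ t/2 + 1; omega, by show t/2 ≤ t/2 + 1; omega⟩

/-- The unfolded position is monotone along the zigzag parametrization. -/
lemma ellf_mono_step (n m : ℕ) (hn : 1 < n) (hm : 1 < m) (t : ℤ) :
    ellf n m (zzpt t) ≤ ellf n m (zzpt (t+1)) := by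
  have hN : (0:ℤ) < (n:ℤ)+m-1 := by omega
  by_cases h : t % 2 = 0
  · have e1 : zzpt t = zzdiag (t/2) := by unfold zzpt; rw [if_pos h]
    have e2 : zzpt (t+1) = zzoff (t/2) := by
      unfold zzpt
      rw [if_neg (by omega : ¬ (t+1) % 2 = 0), show (t+1)/2 = t/2 by omega]
    rw [e1, e2, ellf_diag, ellf_off]
    have key := Int.ediv_le_ediv hN (show t/2 - 1 ≤ t/2 + (m:ℤ) - 1 by omega)
    omega
  · have e1 : zzpt t = zzoff (t/2) := by unfold zzpt; rw [if_neg h]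
    have e2 : zzpt (t+1) = zzdiag (t/2 + 1) := by
      unfold zzpt
      rw [if_pos (by omega : (t+1) % 2 = 0), show (t+1)/2 = t/2 + 1 by omega]
    rw [e1, e2, ellf_off, ellf_diag]
    have key := Int.ediv_le_ediv hN
      (show t/2 + (m:ℤ) - 1 ≤ t/2 + ((n:ℤ)+m-1) by omega)
    have h5 : (t/2 + ((n:ℤ)+m-1)) / ((n:ℤ)+m-1) = (t/2) / ((n:ℤ)+m-1) + 1 := by
      rw [show t/2 + ((n:ℤ)+m-1) = t/2 + 1*((n:ℤ)+m-1) by ring,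
        Int.add_mul_ediv_right _ _ (by omega)]
    have h6 : (t/2 + 1 : ℤ) - 1 = t/2 := by ring
    rw [h6]
    omega

lemma ellf_mono (n m : ℕ) (hn : 1 < n) (hm : 1 < m) {t t' : ℤ} (h : t ≤ t') :
    ellf n m (zzpt t) ≤ ellf n m (zzpt t') := by
  refine Int.le_induction (motive := fun u _ => ellf n m (zzpt t) ≤ ellf n m (zzpt u))
    (le_refl _) ?_ t' h
  intro j _ ih
  exact le_trans ih (ellf_mono_step n m hn hm j)

/-- Windows of unfolded positions are connected subsets of the zigzag. -/
lemma window_connected (n m : ℕ) (hn : 1 < n) (hm : 1 < m) (A B : ℤ) :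
    IsConnectedIn {p : ZZ | A ≤ ellf n m p ∧ ellf n m p < B} := by
  have key : ∀ t t' : ℤ, t ≤ t' →
      zzpt t ∈ {p : ZZ | A ≤ ellf n m p ∧ ellf n m p < B} →
      zzpt t' ∈ {p : ZZ | A ≤ ellf n m p ∧ ellf n m p < B} →
      Relation.ReflTransGen
        (fun a b : ZZ => a ∈ {p : ZZ | A ≤ ellf n m p ∧ ellf n m p < B} ∧
          b ∈ {p : ZZ | A ≤ ellf n m p ∧ ellf n m p < B} ∧ (a ≤ b ∨ b ≤ a))
        (zzpt t) (zzpt t') := by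
    intro t t' htt'
    refine Int.le_induction
      (motive := fun u _ => zzpt t ∈ {p : ZZ | A ≤ ellf n m p ∧ ellf n m p < B} →
        zzpt u ∈ {p : ZZ | A ≤ ellf n m p ∧ ellf n m p < B} →
        Relation.ReflTransGen
          (fun a b : ZZ => a ∈ {p : ZZ | A ≤ ellf n m p ∧ ellf n m p < B} ∧
            b ∈ {p : ZZ | A ≤ ellf n m p ∧ ellf n m p < B} ∧ (a ≤ b ∨ b ≤ a))
          (zzpt t) (zzpt u)) ?_ ?_ t' htt'
    · intro _ _
      exact Relation.ReflTransGen.refl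
    · intro j hj ih ht hj1
      obtain ⟨ht1, ht2⟩ := ht
      obtain ⟨hj11, hj12⟩ := hj1
      have hjS : zzpt j ∈ {p : ZZ | A ≤ ellf n m p ∧ ellf n m p < B} :=
        ⟨le_trans ht1 (ellf_mono n m hn hm hj),
          lt_of_le_of_lt (ellf_mono_step n m hn hm j) hj12⟩
      exact Relation.ReflTransGen.tail (ih ⟨ht1, ht2⟩ hjS)
        ⟨hjS, ⟨hj11, hj12⟩, zzpt_comp j⟩
  intro x hx y hy
  rcases le_total (zzidx x) (zzidx y) with h | h
  · have := key (zzidx x) (zzidx y) h (by rw [zzpt_zzidx]; exact hx)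
      (by rw [zzpt_zzidx]; exact hy)
    rwa [zzpt_zzidx, zzpt_zzidx] at this
  · have := key (zzidx y) (zzidx x) h (by rw [zzpt_zzidx]; exact hy)
      (by rw [zzpt_zzidx]; exact hx)
    rw [zzpt_zzidx, zzpt_zzidx] at this
    exact (@Relation.ReflTransGen.symmetric _ _
      ⟨fun a b hab => ⟨hab.2.1, hab.1, hab.2.2.symm⟩⟩).symm _ _ this

/-- Bounding `p.b` for points with unfolded position in a window. -/
lemma ellf_b_bound (n m : ℕ) (hn : 1 < n) (hm : 1 < m) (p : ZZ) (A B : ℤ)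
    (h1 : A ≤ ellf n m p) (h2 : ellf n m p < B) :
    min A 0 - m ≤ p.b ∧ p.b ≤ max B ((n:ℤ)+m) := by
  have hN : (0:ℤ) < (n:ℤ)+m-1 := by omega
  obtain ⟨x, hx1, hx2, hellf⟩ : ∃ x : ℤ, p.b - 1 ≤ x ∧ x ≤ p.b + m - 1 ∧
      ellf n m p = p.b + x / ((n:ℤ)+m-1) := by
    unfold ellf
    by_cases hc : p.a = p.b
    · exact ⟨p.b - 1, le_refl _, by omega, by rw [if_pos hc]⟩
    · exact ⟨p.b + m - 1, by omega, le_refl _, by rw [if_neg hc]⟩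
  have k1 := Int.mul_ediv_add_emod x ((n:ℤ)+m-1)
  have k2 := Int.emod_nonneg x (show ((n:ℤ)+m-1) ≠ 0 by omega)
  have k3 := Int.emod_lt_of_pos x hN
  constructor
  · rcases le_or_gt (x / ((n:ℤ)+m-1)) 0 with h | h
    · have hle : ellf n m p ≤ p.b := by rw [hellf]; omega
      omega
    · have hge : (1:ℤ) ≤ x / ((n:ℤ)+m-1) := by omega
      have hmul : ((n:ℤ)+m-1) * 1 ≤ ((n:ℤ)+m-1) * (x / ((n:ℤ)+m-1)) :=
        mul_le_mul_of_nonneg_left hge (by omega)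
      omega
  · rcases le_or_gt 0 (x / ((n:ℤ)+m-1)) with h | h
    · have hge : p.b ≤ ellf n m p := by rw [hellf]; omega
      omega
    · have hle : x / ((n:ℤ)+m-1) ≤ -1 := by omega
      have hmul : ((n:ℤ)+m-1) * (x / ((n:ℤ)+m-1)) ≤ ((n:ℤ)+m-1) * (-1) :=
        mul_le_mul_of_nonneg_left hle (by omega)
      omega

/-- Characterization of windows mod `C`. -/
lemma window_iff (C len s e : ℤ) (hC : 0 < C) (hlen : len ≤ C) :
    (∃ z : ℤ, s + z * C ≤ e ∧ e < s + z * C + len) ↔ (e - s) % C < len := by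
  constructor
  · rintro ⟨z, h1, h2⟩
    rw [show e - s = (e - s - z*C) + C*z by ring, Int.add_mul_emod_self_left,
      Int.emod_eq_of_lt (by omega) (by omega)]
    omega
  · intro h
    refine ⟨(e - s)/C, ?_, ?_⟩
    · have h1 := Int.mul_ediv_add_emod (e - s) C
      have h2 : 0 ≤ (e-s) % C := Int.emod_nonneg _ (by omega)
      have h3 : (e-s)/C * C = C * ((e-s)/C) := by ring
      omega
    · have h1 := Int.mul_ediv_add_emod (e - s) C
      have h3 : (e-s)/C * C = C * ((e-s)/C) := by ring
      omega

/-- Membership predicate for values in a subset of the bipath. -/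
def QI {n m : ℕ} (I : Set (Bipath n m)) (v : ℕ) : Prop :=
  ∃ h : v < n + m, (⟨v, h⟩ : Bipath n m) ∈ I

lemma arc_char (n m : ℕ) (hn : 1 < n) (hm : 1 < m) (a c v : ℕ)
    (ha : 1 ≤ a) (hac : a ≤ c) (hc : c ≤ n+m-1) (hv : v < n+m) :
    (((v:ℤ) - a) % ((n:ℤ)+m) < (c:ℤ) - a + 1) ↔ (a ≤ v ∧ v ≤ c) := by
  by_cases h : a ≤ v
  · rw [Int.emod_eq_of_lt (by omega) (by omega)]
    omega
  · rw [show ((v:ℤ) - a) = ((v:ℤ) - a + ((n:ℤ)+m)) + ((n:ℤ)+m) * (-1) by ring,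
      Int.add_mul_emod_self_left, Int.emod_eq_of_lt (by omega) (by omega)]
    omega

lemma arc_char0 (n m : ℕ) (hn : 1 < n) (hm : 1 < m) (a c v : ℕ)
    (ha : a ≤ n-1) (hc : n+1 ≤ c) (hc' : c ≤ n+m-1) (hv : v < n+m) :
    (((v:ℤ) - c) % ((n:ℤ)+m) < ((n:ℤ)+m) - c + a + 1) ↔ (v ≤ a ∨ c ≤ v) := by
  by_cases h : c ≤ v
  · rw [Int.emod_eq_of_lt (by omega) (by omega)]
    omega
  · rw [show ((v:ℤ) - c) = ((v:ℤ) - c + ((n:ℤ)+m)) + ((n:ℤ)+m) * (-1) by ring,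
      Int.add_mul_emod_self_left, Int.emod_eq_of_lt (by omega) (by omega)]
    omega

/-- Classification of proper intervals of the bipath poset as cyclic arcs. -/
lemma bipath_classify (n m : ℕ) (hn : 1 < n) (hm : 1 < m)
    (I : Set (Bipath n m)) (hI : IsIntervalIn I) (hne : I ≠ Set.univ) :
    ∃ (s len : ℤ), 0 < len ∧ len ≤ (n:ℤ)+m-1 ∧
      ∀ (v : ℕ) (h : v < n+m),
        ((⟨v, h⟩ : Bipath n m) ∈ I ↔ ((v:ℤ) - s) % ((n:ℤ)+m) < len) := by
  have conv : ∀ x z y : ℕ, x < n+m → z < n+m → y < n+m → QI I x → QI I y →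
      bipathLE n x z → bipathLE n z y → QI I z := by
    intro x z y hx hz hy hQx hQy h1 h2
    obtain ⟨hx', hxm⟩ := hQx
    obtain ⟨hy', hym⟩ := hQy
    exact ⟨hz, hI.convex (p := ⟨x, hx⟩) (z := ⟨z, hz⟩) (q := ⟨y, hy⟩) hxm hym h1 h2⟩
  have final : ∀ a c : ℕ, 1 ≤ a → a ≤ c → c ≤ n+m-1 →
      (∀ v, v < n+m → (QI I v ↔ (a ≤ v ∧ v ≤ c))) →
      ∃ (s len : ℤ), 0 < len ∧ len ≤ (n:ℤ)+m-1 ∧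
        ∀ (v : ℕ) (h : v < n+m),
          ((⟨v, h⟩ : Bipath n m) ∈ I ↔ ((v:ℤ) - s) % ((n:ℤ)+m) < len) := by
    intro a c h1 h2 h3 hch
    refine ⟨(a:ℤ), (c:ℤ) - a + 1, by omega, by omega, ?_⟩
    intro v h
    rw [arc_char n m hn hm a c v h1 h2 h3 h]
    constructor
    · intro hx
      exact (hch v h).1 ⟨h, hx⟩
    · intro hx
      obtain ⟨h', hx'⟩ := (hch v h).2 hx
      exact hx'
  by_cases hQn : QI I n
  · by_cases hQ0 : QI I 0
    · exfalso
      apply hne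
      apply Set.eq_univ_iff_forall.2
      rintro ⟨v, hv⟩
      obtain ⟨h', hmem⟩ := conv 0 v n (by omega) hv (by omega) hQ0 hQn
        (by unfold bipathLE; omega) (by unfold bipathLE; omega)
      exact hmem
    · -- Case A: n ∈ I, 0 ∉ I
      have hPn : ∃ v, QI I v ∧ v ≤ n := ⟨n, hQn, le_refl n⟩
      have hP2 : ∃ k, QI I (n+m-1-k) ∧ n ≤ n+m-1-k :=
        ⟨m-1, by rw [show n+m-1-(m-1) = n by omega]; exact ⟨hQn, le_refl n⟩⟩
      obtain ⟨a, haQ, han, hamin⟩ :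
          ∃ a, QI I a ∧ a ≤ n ∧ ∀ v, QI I v → v ≤ n → a ≤ v :=
        ⟨Nat.find hPn, (Nat.find_spec hPn).1, (Nat.find_spec hPn).2,
          fun v hv h' => Nat.find_min' hPn ⟨hv, h'⟩⟩
      obtain ⟨c, hcQ, hcn, hcle, hcmax⟩ :
          ∃ c, QI I c ∧ n ≤ c ∧ c ≤ n+m-1 ∧ ∀ v, QI I v → n ≤ v → v < n+m → v ≤ c :=
        ⟨n+m-1 - Nat.find hP2, (Nat.find_spec hP2).1, (Nat.find_spec hP2).2, by omega,
          fun v hv h1 h2 => by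
            have := Nat.find_min' hP2 (m := n+m-1-v)
              (by rw [show n+m-1-(n+m-1-v) = v by omega]; exact ⟨hv, h1⟩)
            omega⟩
      have ha1 : 1 ≤ a := by
        rcases Nat.eq_zero_or_pos a with h | h
        · rw [h] at haQ
          exact absurd haQ hQ0
        · exact h
      refine final a c ha1 (le_trans han hcn) hcle ?_
      intro v hv
      constructor
      · intro hQv
        by_cases hvn : v ≤ n
        · exact ⟨hamin v hQv hvn, le_trans hvn hcn⟩
        · exact ⟨by omega, hcmax v hQv (by omega) hv⟩
      · rintro ⟨h1, h2⟩
        by_cases hvn : v ≤ n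
        · exact conv a v n (by omega) hv (by omega) haQ hQn
            (by unfold bipathLE; omega) (by unfold bipathLE; omega)
        · exact conv c v n (by omega) hv (by omega) hcQ hQn
            (by unfold bipathLE; omega) (by unfold bipathLE; omega)
  · by_cases hQ0 : QI I 0
    · -- Case B: 0 ∈ I, n ∉ I
      have hPa : ∃ k, QI I (n-1-k) :=
        ⟨n-1, by rw [show n-1-(n-1) = 0 by omega]; exact hQ0⟩
      obtain ⟨a, haQ, han, hamax⟩ :
          ∃ a, QI I a ∧ a ≤ n-1 ∧ ∀ v, QI I v → v ≤ n-1 → v ≤ a :=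
        ⟨n-1 - Nat.find hPa, Nat.find_spec hPa, by omega,
          fun v hv h' => by
            have := Nat.find_min' hPa (m := n-1-v)
              (by rw [show n-1-(n-1-v) = v by omega]; exact hv)
            omega⟩
      by_cases hR : ∃ v, QI I v ∧ n+1 ≤ v
      · obtain ⟨c, hcQ, hcn, hcmin⟩ :
            ∃ c, QI I c ∧ n+1 ≤ c ∧ ∀ v, QI I v → n+1 ≤ v → c ≤ v :=
          ⟨Nat.find hR, (Nat.find_spec hR).1, (Nat.find_spec hR).2,
            fun v hv h' => Nat.find_min' hR ⟨hv, h'⟩⟩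
        have hcle : c ≤ n+m-1 := by
          obtain ⟨h', _⟩ := hcQ
          omega
        have hch : ∀ v, v < n+m → (QI I v ↔ (v ≤ a ∨ c ≤ v)) := by
          intro v hv
          constructor
          · intro hQv
            rcases Nat.lt_trichotomy v n with h | h | h
            · exact Or.inl (hamax v hQv (by omega))
            · rw [h] at hQv
              exact absurd hQv hQn
            · exact Or.inr (hcmin v hQv (by omega))
          · rintro (h | h)
            · exact conv 0 v a (by omega) hv (by omega) hQ0 haQ
                (by unfold bipathLE; omega) (by unfold bipathLE; omega)
            · exact conv 0 v c (by omega) hv (by omega) hQ0 hcQ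
                (by unfold bipathLE; omega) (by unfold bipathLE; omega)
        refine ⟨(c:ℤ), ((n:ℤ)+m) - c + a + 1, by omega, by omega, ?_⟩
        intro v h
        rw [arc_char0 n m hn hm a c v han hcn hcle h]
        constructor
        · intro hx
          exact (hch v h).1 ⟨h, hx⟩
        · intro hx
          obtain ⟨h', hx'⟩ := (hch v h).2 hx
          exact hx'
      · have hch : ∀ v, v < n+m → (QI I v ↔ v ≤ a) := by
          intro v hv
          constructor
          · intro hQv
            rcases Nat.lt_trichotomy v n with h | h | h
            · exact hamax v hQv (by omega)
            · rw [h] at hQv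
              exact absurd hQv hQn
            · exact absurd ⟨v, hQv, by omega⟩ hR
          · intro h
            exact conv 0 v a (by omega) hv (by omega) hQ0 haQ
              (by unfold bipathLE; omega) (by unfold bipathLE; omega)
        refine ⟨0, (a:ℤ) + 1, by omega, by omega, ?_⟩
        intro v h
        have e : ((v:ℤ) - 0) % ((n:ℤ)+m) = (v:ℤ) := by
          rw [show (v:ℤ) - 0 = (v:ℤ) by ring, Int.emod_eq_of_lt (by omega) (by omega)]
        rw [e]
        constructor
        · intro hx
          have := (hch v h).1 ⟨h, hx⟩
          omega
        · intro hx
          obtain ⟨h', hx'⟩ := (hch v h).2 (by omega)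
          exact hx'
    · -- Case C: 0 ∉ I, n ∉ I
      obtain ⟨p0, hp0⟩ := hI.nonempty
      have hQv0 : QI I p0.1 := ⟨p0.2, hp0⟩
      have hv0ne0 : p0.1 ≠ 0 := fun h => hQ0 (by rw [h] at hQv0; exact hQv0)
      have hv0nen : p0.1 ≠ n := fun h => hQn (by rw [h] at hQv0; exact hQv0)
      have hv0lt : p0.1 < n+m := p0.2
      have hEx : ∃ v, QI I v := ⟨p0.1, hQv0⟩
      obtain ⟨a, haQ, hamin⟩ : ∃ a, QI I a ∧ ∀ v, QI I v → a ≤ v :=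
        ⟨Nat.find hEx, Nat.find_spec hEx, fun v hv => Nat.find_min' hEx hv⟩
      rcases Nat.lt_or_ge p0.1 n with hside | hside
      · -- left chain
        have stepL : ∀ x y : Bipath n m, x ∈ I → y ∈ I → (x ≤ y ∨ y ≤ x) →
            (1 ≤ x.1 ∧ x.1 ≤ n-1) → (1 ≤ y.1 ∧ y.1 ≤ n-1) := by
          intro x y hxI hyI hcomp hx
          have hy0 : y.1 ≠ 0 := by
            intro h
            exact hQ0 ⟨by omega, by
              rwa [show (⟨0, by omega⟩ : Bipath n m) = y from Subtype.ext (show (0:ℕ) = y.1 by omega)]⟩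
          have hyn : y.1 ≠ n := by
            intro h
            exact hQn ⟨by omega, by
              rwa [show (⟨n, by omega⟩ : Bipath n m) = y from Subtype.ext (show (n:ℕ) = y.1 by omega)]⟩
          have hy2 : y.1 < n+m := y.2
          have hx2 : x.1 < n+m := x.2
          rcases hcomp with h | h
          · have h' : bipathLE n x.1 y.1 := h
            unfold bipathLE at h'
            omega
          · have h' : bipathLE n y.1 x.1 := h
            unfold bipathLE at h'
            omega
        have hall : ∀ v, QI I v → 1 ≤ v ∧ v ≤ n-1 := by
          rintro v ⟨hv, hvI⟩
          have hchain := hI.connected p0 hp0 ⟨v, hv⟩ hvI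
          have inv : ∀ y : Bipath n m,
              Relation.ReflTransGen
                (fun a b : Bipath n m => a ∈ I ∧ b ∈ I ∧ (a ≤ b ∨ b ≤ a)) p0 y →
              1 ≤ y.1 ∧ y.1 ≤ n-1 := by
            intro y hy
            induction hy with
            | refl => exact ⟨by omega, by omega⟩
            | tail h1 h2 ih => exact stepL _ _ h2.1 h2.2.1 h2.2.2 ih
          exact inv _ hchain
        have hPc : ∃ k, QI I (n-1-k) :=
          ⟨n-1-p0.1, by rw [show n-1-(n-1-p0.1) = p0.1 by omega]; exact hQv0⟩
        obtain ⟨c, hcQ, hcmax⟩ : ∃ c, QI I c ∧ ∀ v, QI I v → v ≤ c :=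
          ⟨n-1 - Nat.find hPc, Nat.find_spec hPc, fun v hv => by
            have h1 := (hall v hv).2
            have := Nat.find_min' hPc (m := n-1-v)
              (by rw [show n-1-(n-1-v) = v by omega]; exact hv)
            omega⟩
        have haB := hall a haQ
        have hcB := hall c hcQ
        refine final a c haB.1 (hamin c hcQ) (by omega) ?_
        intro v hv
        constructor
        · intro hQv
          exact ⟨hamin v hQv, hcmax v hQv⟩
        · rintro ⟨h1, h2⟩
          exact conv a v c (by omega) hv (by omega) haQ hcQ
            (by unfold bipathLE; omega) (by unfold bipathLE; omega)
      · -- right chain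
        have stepR : ∀ x y : Bipath n m, x ∈ I → y ∈ I → (x ≤ y ∨ y ≤ x) →
            (n+1 ≤ x.1) → (n+1 ≤ y.1) := by
          intro x y hxI hyI hcomp hx
          have hy0 : y.1 ≠ 0 := by
            intro h
            exact hQ0 ⟨by omega, by
              rwa [show (⟨0, by omega⟩ : Bipath n m) = y from Subtype.ext (show (0:ℕ) = y.1 by omega)]⟩
          have hyn : y.1 ≠ n := by
            intro h
            exact hQn ⟨by omega, by
              rwa [show (⟨n, by omega⟩ : Bipath n m) = y from Subtype.ext (show (n:ℕ) = y.1 by omega)]⟩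
          have hy2 : y.1 < n+m := y.2
          have hx2 : x.1 < n+m := x.2
          rcases hcomp with h | h
          · have h' : bipathLE n x.1 y.1 := h
            unfold bipathLE at h'
            omega
          · have h' : bipathLE n y.1 x.1 := h
            unfold bipathLE at h'
            omega
        have hall : ∀ v, QI I v → n+1 ≤ v ∧ v ≤ n+m-1 := by
          rintro v ⟨hv, hvI⟩
          have hchain := hI.connected p0 hp0 ⟨v, hv⟩ hvI
          have inv : ∀ y : Bipath n m,
              Relation.ReflTransGen
                (fun a b : Bipath n m => a ∈ I ∧ b ∈ I ∧ (a ≤ b ∨ b ≤ a)) p0 y →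
              n+1 ≤ y.1 := by
            intro y hy
            induction hy with
            | refl => omega
            | tail h1 h2 ih => exact stepR _ _ h2.1 h2.2.1 h2.2.2 ih
          exact ⟨inv _ hchain, by omega⟩
        have hPc : ∃ k, QI I (n+m-1-k) :=
          ⟨n+m-1-p0.1, by rw [show n+m-1-(n+m-1-p0.1) = p0.1 by omega]; exact hQv0⟩
        obtain ⟨c, hcQ, hcle, hcmax⟩ :
            ∃ c, QI I c ∧ c ≤ n+m-1 ∧ ∀ v, QI I v → v ≤ c :=
          ⟨n+m-1 - Nat.find hPc, Nat.find_spec hPc, by omega, fun v hv => by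
            have h1 := (hall v hv).2
            have := Nat.find_min' hPc (m := n+m-1-v)
              (by rw [show n+m-1-(n+m-1-v) = v by omega]; exact hv)
            omega⟩
        have haB := hall a haQ
        have hcB := hall c hcQ
        refine final a c (by omega) (hamin c hcQ) hcle ?_
        intro v hv
        constructor
        · intro hQv
          exact ⟨hamin v hQv, hcmax v hQv⟩
        · rintro ⟨h1, h2⟩
          exact conv c v a (by omega) hv (by omega) hcQ haQ
            (by unfold bipathLE; omega) (by unfold bipathLE; omega)

end MainAux

/-- For any interval `I` of the bipath poset other than the full interval, the
preimage `ζ⁻¹(I)` is a disjoint union of intervals of `ZZ` indexed by `ℤ`,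
where consecutive ones are translates by `N`; in particular every connected
component is finite. -/
theorem preimage_interval_periodic (n m : ℕ) (hn : 1 < n) (hm : 1 < m)
    (I : Set (Bipath n m)) (hI : IsIntervalIn I) (hne : I ≠ Set.univ) :
    ∃ J : ℤ → Set ZZ,
      (∀ z, IsIntervalIn (J z)) ∧
      (∀ z, J (z + 1) = ZZ.translate ((n:ℤ)+m-1) 1 '' J z) ∧
      (∀ z w, z ≠ w → Disjoint (J z) (J w)) ∧
      (⋃ z, J z) = zeta n m hn hm ⁻¹' I ∧
      (∀ z, (J z).Finite) := by
  obtain ⟨s, len, hlen0, hlenN, hchar⟩ := bipath_classify n m hn hm I hI hne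
  refine ⟨fun z => {p : ZZ | s + z * ((n:ℤ)+m) ≤ ellf n m p ∧
      ellf n m p < s + z * ((n:ℤ)+m) + len}, ?_, ?_, ?_, ?_, ?_⟩
  · intro z
    refine ⟨?_, zz_convex _, window_connected n m hn hm _ _⟩
    obtain ⟨p, hp⟩ := ellf_surj n m hn hm (s + z * ((n:ℤ)+m))
    exact ⟨p, le_of_eq hp.symm, by rw [hp]; omega⟩
  · intro z
    ext p
    simp only [Set.mem_image, Set.mem_setOf_eq]
    have e : (z+1) * ((n:ℤ)+m) = z * ((n:ℤ)+m) + ((n:ℤ)+m) := by ring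
    constructor
    · rintro ⟨h1, h2⟩
      refine ⟨ZZ.translate ((n:ℤ)+m-1) (-1) p, ?_, translate_one_inv _ p⟩
      have ht := ellf_translate n m hn hm (ZZ.translate ((n:ℤ)+m-1) (-1) p)
      rw [translate_one_inv] at ht
      constructor <;> omega
    · rintro ⟨q, ⟨h1, h2⟩, rfl⟩
      have ht := ellf_translate n m hn hm q
      constructor <;> omega
  · intro z w hzw
    rw [Set.disjoint_left]
    rintro p ⟨h1, h2⟩ ⟨h3, h4⟩
    rcases lt_or_gt_of_ne hzw with h | h
    · have h5 : (z+1) * ((n:ℤ)+m) ≤ w * ((n:ℤ)+m) :=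
        mul_le_mul_of_nonneg_right (by omega) (by omega)
      have e : (z+1) * ((n:ℤ)+m) = z * ((n:ℤ)+m) + ((n:ℤ)+m) := by ring
      omega
    · have h5 : (w+1) * ((n:ℤ)+m) ≤ z * ((n:ℤ)+m) :=
        mul_le_mul_of_nonneg_right (by omega) (by omega)
      have e : (w+1) * ((n:ℤ)+m) = w * ((n:ℤ)+m) + ((n:ℤ)+m) := by ring
      omega
  · ext p
    simp only [Set.mem_iUnion, Set.mem_setOf_eq, Set.mem_preimage]
    have hz : zeta n m hn hm p ∈ I ↔
        ((↑(zetaFun n m p.a p.b) : ℤ) - s) % ((n:ℤ)+m) < len :=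
      hchar _ (zetaFun_lt n m hn hm p.a p.b)
    rw [hz, zeta_val_eq n m hn hm p, Int.sub_emod, Int.emod_emod_of_dvd _ dvd_rfl,
      ← Int.sub_emod]
    exact window_iff ((n:ℤ)+m) len s (ellf n m p) (by omega) (by omega)
  · intro z
    apply Set.Finite.subset (Set.Finite.preimage
      (fun x _ y _ h => zzidx_inj h)
      (Set.finite_Icc (2 * (min (s + z*((n:ℤ)+m)) 0 - m))
        (2 * (max (s + z*((n:ℤ)+m) + len) ((n:ℤ)+m)) + 1)))
    rintro p ⟨h1, h2⟩
    obtain ⟨hb1, hb2⟩ := ellf_b_bound n m hn hm p _ _ h1 h2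
    simp only [Set.mem_preimage, Set.mem_Icc]
    unfold zzidx
    split_ifs <;> omega
end
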